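/- arXiv:math/9811175 — 8 statements merged into one kernel-verified Lean document; each statement's English description precedes it below -/
import Mathlib

section
/- For any domain (a,b), any s0 ≥ 1 and any k ≥ 1, the binary word (for i = 1) of the ground-state segment \bar p(s0+4k−1;a,b) ⋯ \bar p(s0;a,b) reduces, after repeatedly deleting adjacent pairs '01' (a 0 immediately left of a 1), to 1^c 0^c, where c = a+b if s0 ≡ 1 (mod 4), c = n+a−b if s0 ≡ 2 (mod 4), c = m−n−a+b if s0 ≡ 3 (mod 4), and c = m−a−b if s0 ≡ 0 (mod 4). For i = 0 the same holds with a replaced by m−n−a and b replaced by n−b. -/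
set_option maxRecDepth 8000
set_option maxHeartbeats 1600000

namespace Stmt0

/-- One-step deletion of an adjacent pair `01` (a `0` immediately to the left of a `1`),
where `true` represents the letter `1` and `false` the letter `0`. -/
inductive DelStep : List Bool → List Bool → Prop
  | del (u v : List Bool) : DelStep (u ++ false :: true :: v) (u ++ v)

/-- The ground-state path value `\bar p(s; a, b)`. -/
def barp (m n a b : ℤ) (s : ℕ) : ℤ :=
  if s % 2 = 1 then n - b else if s % 4 = 0 then a + b else m - n - a + b

/-- The binary word `1^x 0^y` encoding value `v` at position `s`, for `i ∈ {0,1}`. -/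
def wordOfVal (m n : ℤ) (i : Fin 2) (s : ℕ) (v : ℤ) : List Bool :=
  if i = 0 then
    List.replicate ((if s % 2 = 1 then n else m) - v).toNat true
      ++ List.replicate v.toNat false
  else
    List.replicate v.toNat true
      ++ List.replicate ((if s % 2 = 1 then n else m) - v).toNat false

/-- The word of the ground state segment
`\bar p(s0 + len - 1; a, b) ⋯ \bar p(s0; a, b)` (larger `s` on the left). -/
def gsWord (m n a b : ℤ) (i : Fin 2) (s0 len : ℕ) : List Bool :=
  (((List.range len).reverse).map
    (fun t => wordOfVal m n i (s0 + t) (barp m n a b (s0 + t)))).flatten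

/-- The exponent `c` depending on `s0` modulo 4. -/
def cval (m n a b : ℤ) (s0 : ℕ) : ℤ :=
  if s0 % 4 = 1 then a + b
  else if s0 % 4 = 2 then n + a - b
  else if s0 % 4 = 3 then m - n - a + b
  else m - a - b

open Relation List

lemma delstep_context (u v : List Bool) {l l' : List Bool} (h : DelStep l l') :
    DelStep (u ++ l ++ v) (u ++ l' ++ v) := by
  cases h with
  | del u' v' =>
    have := DelStep.del (u ++ u') (v' ++ v)
    simpa [List.append_assoc] using this

lemma rtg_context (u v : List Bool) {l l' : List Bool}
    (h : ReflTransGen DelStep l l') :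
    ReflTransGen DelStep (u ++ l ++ v) (u ++ l' ++ v) :=
  ReflTransGen.lift (fun x => u ++ x ++ v) (fun _ _ hab => delstep_context u v hab) _ _ h

lemma cancel (t y z : ℕ) :
    ReflTransGen DelStep
      (List.replicate (y + t) false ++ List.replicate (z + t) true)
      (List.replicate y false ++ List.replicate z true) := by
  induction t with
  | zero => exact ReflTransGen.refl
  | succ t ih =>
    refine ReflTransGen.head ?_ ih
    have h := DelStep.del (List.replicate (y + t) false) (List.replicate (z + t) true)
    have e1 : List.replicate (y + (t+1)) false ++ List.replicate (z + (t+1)) true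
        = List.replicate (y + t) false ++ false :: true :: List.replicate (z + t) true := by
      rw [show y + (t+1) = (y+t) + 1 from rfl, show z + (t+1) = (z+t)+1 from rfl,
        List.replicate_succ', List.replicate_succ]
      simp
    rw [e1]
    exact h

lemma merge (x y z w : ℕ) :
    ReflTransGen DelStep
      (List.replicate x true ++ List.replicate y false
        ++ (List.replicate z true ++ List.replicate w false))
      (List.replicate (x + (z - y)) true ++ List.replicate ((y - z) + w) false) := by
  rcases le_total y z with h | h
  · have hc : ReflTransGen DelStep (List.replicate y false ++ List.replicate z true)
        (List.replicate 0 false ++ List.replicate (z - y) true) := by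
      have := cancel y 0 (z - y)
      simpa [Nat.sub_add_cancel h] using this
    have h2 := rtg_context (List.replicate x true) (List.replicate w false) hc
    have e1 : y - z = 0 := Nat.sub_eq_zero_of_le h
    have eL : List.replicate x true ++ (List.replicate y false ++ List.replicate z true)
        ++ List.replicate w false
        = List.replicate x true ++ List.replicate y false
          ++ (List.replicate z true ++ List.replicate w false) := by
      simp only [List.append_assoc]
    have eR : List.replicate x true ++ (List.replicate 0 false ++ List.replicate (z-y) true)
        ++ List.replicate w false
        = List.replicate (x + (z - y)) true ++ List.replicate ((y - z) + w) false := by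
      rw [e1, List.replicate_add]
      simp [List.append_assoc]
    rw [eL, eR] at h2
    exact h2
  · have hc : ReflTransGen DelStep (List.replicate y false ++ List.replicate z true)
        (List.replicate (y - z) false ++ List.replicate 0 true) := by
      have := cancel z (y - z) 0
      simpa [Nat.sub_add_cancel h] using this
    have h2 := rtg_context (List.replicate x true) (List.replicate w false) hc
    have e1 : z - y = 0 := Nat.sub_eq_zero_of_le h
    have eL : List.replicate x true ++ (List.replicate y false ++ List.replicate z true)
        ++ List.replicate w false
        = List.replicate x true ++ List.replicate y false
          ++ (List.replicate z true ++ List.replicate w false) := by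
      simp only [List.append_assoc]
    have eR : List.replicate x true ++ (List.replicate (y-z) false ++ List.replicate 0 true)
        ++ List.replicate w false
        = List.replicate (x + (z - y)) true ++ List.replicate ((y - z) + w) false := by
      rw [e1, List.replicate_add]
      simp [List.append_assoc]
    rw [eL, eR] at h2
    exact h2

lemma rtg_append_right (r : List Bool) {l l' : List Bool}
    (h : ReflTransGen DelStep l l') : ReflTransGen DelStep (l ++ r) (l' ++ r) := by
  simpa using rtg_context [] r h

lemma rtg_append_left (u : List Bool) {l l' : List Bool}
    (h : ReflTransGen DelStep l l') : ReflTransGen DelStep (u ++ l) (u ++ l') := by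
  simpa using rtg_context u [] h

lemma merge' (x y z w : ℕ) (r : List Bool) :
    ReflTransGen DelStep
      (List.replicate x true ++ (List.replicate y false ++
        (List.replicate z true ++ (List.replicate w false ++ r))))
      (List.replicate (x + (z - y)) true ++ (List.replicate ((y - z) + w) false ++ r)) := by
  have := rtg_append_right r (merge x y z w)
  simpa [List.append_assoc] using this

lemma merge4 (x1 y1 x2 y2 x3 y3 x4 y4 p q : ℕ)
    (hp : p = x1 + (x2 - y1) + (x3 - ((y1 - x2) + y2)) + (x4 - ((((y1 - x2) + y2) - x3) + y3)))
    (hq : q = (((((y1 - x2) + y2) - x3) + y3) - x4) + y4) :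
    ReflTransGen DelStep
      (List.replicate x1 true ++ (List.replicate y1 false ++
        (List.replicate x2 true ++ (List.replicate y2 false ++
        (List.replicate x3 true ++ (List.replicate y3 false ++
        (List.replicate x4 true ++ List.replicate y4 false)))))))
      (List.replicate p true ++ List.replicate q false) := by
  subst hp hq
  refine ReflTransGen.trans (merge' x1 y1 x2 y2 _) ?_
  refine ReflTransGen.trans (merge' (x1 + (x2 - y1)) ((y1 - x2) + y2) x3 y3
    (List.replicate x4 true ++ List.replicate y4 false)) ?_
  have := merge (x1 + (x2 - y1) + (x3 - ((y1 - x2) + y2)))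
    ((((y1 - x2) + y2) - x3) + y3) x4 y4
  simpa [List.append_assoc] using this

lemma gsWord_add (m n a b : ℤ) (i : Fin 2) (s0 x y : ℕ) :
    gsWord m n a b i s0 (y + x) = gsWord m n a b i (s0 + y) x ++ gsWord m n a b i s0 y := by
  simp only [gsWord, List.range_add, List.reverse_append, List.map_append, List.flatten_append,
    List.map_reverse, List.map_map]
  congr 3
  · apply List.map_congr_left
    intro t _
    simp [Function.comp, add_assoc]

lemma gsWord_four (m n a b : ℤ) (i : Fin 2) (s0 : ℕ) :
    gsWord m n a b i s0 4 =
      wordOfVal m n i (s0+3) (barp m n a b (s0+3)) ++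
      (wordOfVal m n i (s0+2) (barp m n a b (s0+2)) ++
      (wordOfVal m n i (s0+1) (barp m n a b (s0+1)) ++
      wordOfVal m n i s0 (barp m n a b s0))) := by
  have : (List.range 4).reverse = [3,2,1,0] := rfl
  simp [gsWord, this]

lemma base (m n a b : ℤ) (hmn : n < m) (hn : 1 ≤ n) (ha0 : 0 ≤ a) (ha1 : a ≤ m - n)
    (hb0 : 0 ≤ b) (hb1 : b ≤ n) (s0 : ℕ) :
    ReflTransGen DelStep (gsWord m n a b 1 s0 4)
      (List.replicate (cval m n a b s0).toNat true
        ++ List.replicate (cval m n a b s0).toNat false) := by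
  rw [gsWord_four]
  have h4 : s0 % 4 = 0 ∨ s0 % 4 = 1 ∨ s0 % 4 = 2 ∨ s0 % 4 = 3 := by omega
  rcases h4 with hr | hr | hr | hr
  · have m3 : (s0+3) % 2 = 1 := by omega
    have m2a : (s0+2) % 2 = 0 := by omega
    have m2b : (s0+2) % 4 = 2 := by omega
    have m1 : (s0+1) % 2 = 1 := by omega
    have m0a : s0 % 2 = 0 := by omega
    simp only [wordOfVal, barp, cval, m3, m2a, m2b, m1, m0a, hr]
    norm_num
    exact merge4 _ _ _ _ _ _ _ _ _ _ (by omega) (by omega)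
  · have m3 : (s0+3) % 2 = 0 := by omega
    have m3b : (s0+3) % 4 = 0 := by omega
    have m2a : (s0+2) % 2 = 1 := by omega
    have m1 : (s0+1) % 2 = 0 := by omega
    have m1b : (s0+1) % 4 = 2 := by omega
    have m0a : s0 % 2 = 1 := by omega
    simp only [wordOfVal, barp, cval, m3, m3b, m2a, m1, m1b, m0a, hr]
    norm_num
    exact merge4 _ _ _ _ _ _ _ _ _ _ (by omega) (by omega)
  · have m3 : (s0+3) % 2 = 1 := by omega
    have m2a : (s0+2) % 2 = 0 := by omega
    have m2b : (s0+2) % 4 = 0 := by omega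
    have m1 : (s0+1) % 2 = 1 := by omega
    have m0a : s0 % 2 = 0 := by omega
    simp only [wordOfVal, barp, cval, m3, m2a, m2b, m1, m0a, hr]
    norm_num
    exact merge4 _ _ _ _ _ _ _ _ _ _ (by omega) (by omega)
  · have m3 : (s0+3) % 2 = 0 := by omega
    have m3b : (s0+3) % 4 = 2 := by omega
    have m2a : (s0+2) % 2 = 1 := by omega
    have m1 : (s0+1) % 2 = 0 := by omega
    have m1b : (s0+1) % 4 = 0 := by omega
    have m0a : s0 % 2 = 1 := by omega
    simp only [wordOfVal, barp, cval, m3, m3b, m2a, m1, m1b, m0a, hr]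
    norm_num
    exact merge4 _ _ _ _ _ _ _ _ _ _ (by omega) (by omega)

lemma main (m n a b : ℤ) (hmn : n < m) (hn : 1 ≤ n) (ha0 : 0 ≤ a) (ha1 : a ≤ m - n)
    (hb0 : 0 ≤ b) (hb1 : b ≤ n) (k : ℕ) (hk : 1 ≤ k) :
    ∀ s0 : ℕ,
      ReflTransGen DelStep (gsWord m n a b 1 s0 (4 * k))
        (List.replicate (cval m n a b s0).toNat true
          ++ List.replicate (cval m n a b s0).toNat false) := by
  induction k, hk using Nat.le_induction with
  | base =>
    intro s0
    have : 4 * 1 = 4 := rfl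
    rw [this]
    exact base m n a b hmn hn ha0 ha1 hb0 hb1 s0
  | succ k hk ih =>
    intro s0
    have h1 : 4 * (k + 1) = 4 + 4 * k := by ring
    rw [h1, gsWord_add]
    have ecv : cval m n a b (s0 + 4) = cval m n a b s0 := by
      simp [cval, Nat.add_mod_right]
    set C := (cval m n a b s0).toNat with hC
    have step1 : ReflTransGen DelStep
        (gsWord m n a b 1 (s0 + 4) (4 * k) ++ gsWord m n a b 1 s0 4)
        ((List.replicate C true ++ List.replicate C false) ++ gsWord m n a b 1 s0 4) := by
      apply rtg_append_right
      have := ih (s0 + 4)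
      rwa [ecv] at this
    have step2 : ReflTransGen DelStep
        ((List.replicate C true ++ List.replicate C false) ++ gsWord m n a b 1 s0 4)
        ((List.replicate C true ++ List.replicate C false)
          ++ (List.replicate C true ++ List.replicate C false)) :=
      rtg_append_left _ (base m n a b hmn hn ha0 ha1 hb0 hb1 s0)
    have step3 : ReflTransGen DelStep
        ((List.replicate C true ++ List.replicate C false)
          ++ (List.replicate C true ++ List.replicate C false))
        (List.replicate C true ++ List.replicate C false) := by
      have := merge C C C C
      simpa [Nat.sub_self] using this
    exact (step1.trans step2).trans step3

lemma repeq (A B C D : ℤ) (h1 : A = C) (h2 : B = D) :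
    List.replicate A.toNat true ++ List.replicate B.toNat false
      = List.replicate C.toNat true ++ List.replicate D.toNat false := by
  rw [h1, h2]

lemma wordOfVal0 (m n v : ℤ) (s : ℕ) :
    wordOfVal m n 0 s v = List.replicate ((if s % 2 = 1 then n else m) - v).toNat true
      ++ List.replicate v.toNat false := by
  simp [wordOfVal]

lemma wordOfVal1 (m n v : ℤ) (s : ℕ) :
    wordOfVal m n 1 s v = List.replicate v.toNat true
      ++ List.replicate ((if s % 2 = 1 then n else m) - v).toNat false := by
  have h1 : (1 : Fin 2) ≠ 0 := by decide
  simp [wordOfVal, h1]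

lemma word01 (m n a b : ℤ) (s : ℕ) :
    wordOfVal m n 0 s (barp m n a b s) = wordOfVal m n 1 s (barp m n (m-n-a) (n-b) s) := by
  rw [wordOfVal0, wordOfVal1]
  unfold barp
  split_ifs <;> exact repeq _ _ _ _ (by ring) (by ring)

lemma gsWord01 (m n a b : ℤ) (s0 len : ℕ) :
    gsWord m n a b 0 s0 len = gsWord m n (m-n-a) (n-b) 1 s0 len := by
  unfold gsWord
  congr 1
  apply List.map_congr_left
  intro t _
  exact word01 m n a b (s0 + t)

theorem stmt0 (m n a b : ℤ) (hmn : n < m) (hn : 1 ≤ n)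
    (ha0 : 0 ≤ a) (ha1 : a ≤ m - n) (hb0 : 0 ≤ b) (hb1 : b ≤ n)
    (s0 k : ℕ) (hs0 : 1 ≤ s0) (hk : 1 ≤ k) :
    Relation.ReflTransGen DelStep (gsWord m n a b 1 s0 (4 * k))
      (List.replicate (cval m n a b s0).toNat true
        ++ List.replicate (cval m n a b s0).toNat false) ∧
    Relation.ReflTransGen DelStep (gsWord m n a b 0 s0 (4 * k))
      (List.replicate (cval m n (m - n - a) (n - b) s0).toNat true
        ++ List.replicate (cval m n (m - n - a) (n - b) s0).toNat false) := by
  constructor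
  · exact main m n a b hmn hn ha0 ha1 hb0 hb1 k hk s0
  · rw [gsWord01]
    exact main m n (m-n-a) (n-b) hmn hn (by omega) (by omega) (by omega) (by omega) k hk s0

end Stmt0
end

section
/- For every admissible path p ∈ P_{a,b}, the crystal energy satisfies h(p) = (1/2) · Σ_{s≥1} s·|r_p(s+2) − r_p(s)|, where the sum has finitely many nonzero terms. -/
/-
At an even step `u` the two admissibility inequalities pinch, `a_p(u+1) = p(u)`. Feeding this
into the recursion for `a_p` shows that every admissible path satisfies
`p(2s) + 2 p(2s+1) + p(2s+2) = m + n` and `n ≤ p(2s) + p(2s+1) ≤ m`. In that regime only the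
branch `n ≤ i + j ≤ m` of `h1`, `h2`, `h3` occurs, and the three local energies evaluate to
`n - |p(2s-1) - p(2s+1)|`, `m` and `n`. The ground state obeys the same constraints and is
constant on odd sites, so the `s`-th term of the crystal energy is `-|p(2s-1) - p(2s+1)|`.
On the other side `r_p(s+2) - r_p(s) = ±(a_p(2s+3) - a_p(2s-1)) = ±2 (p(2s-1) - p(2s+1))`.
-/

namespace Stmt2

/-- The ground-state path value `\bar p(s; a, b)`. -/
def barp (m n a b : ℤ) (s : ℕ) : ℤ :=
  if s % 2 = 1 then n - b else if s % 4 = 0 then a + b else m - n - a + b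

/-- Membership in the path space `P_{a,b}`. -/
def IsPath (m n a b : ℤ) (p : ℕ → ℤ) : Prop :=
  (∀ s : ℕ, 1 ≤ s → 0 ≤ p s ∧ p s ≤ (if s % 2 = 1 then n else m)) ∧
  ∃ S : ℕ, ∀ s ≥ S, p s = barp m n a b s

/-- The eventual (ground-state) weight sequence `ā(s)`. -/
def abar (m n a b : ℤ) (s : ℕ) : ℤ :=
  if s % 4 = 1 then a + b
  else if s % 4 = 2 then n + a - b
  else if s % 4 = 3 then m - n - a + b
  else m - a - b

/-- `A` is the weight sequence `a_p` attached to the path `p`. -/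
def IsWeightSeq (m n a b : ℤ) (p A : ℕ → ℤ) : Prop :=
  (∀ s : ℕ, 1 ≤ s → A s = A (s + 1) + (if s % 2 = 1 then n else m) - 2 * p s) ∧
  ∃ S : ℕ, ∀ s ≥ S, A s = abar m n a b s

/-- The admissibility inequalities for the weight sequence `A = a_p`. -/
def AdmIneq (m n : ℤ) (p A : ℕ → ℤ) : Prop :=
  ∀ s : ℕ, 1 ≤ s →
    p s ≤ A (s + 1) ∧ (if s % 2 = 1 then n else m) - p s ≤ m - A (s + 1)

/-- `{a}_b` : `a` if `a ≤ b`, and `2b - a` if `a ≥ b`. -/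
def curly (x c : ℤ) : ℤ := if x ≤ c then x else 2 * c - x

def h1 (m n i j k : ℤ) : ℤ :=
  if i + j ≤ min m n then curly (k + j) n
  else if m ≤ i + j ∧ i + j ≤ n then curly (k + i + 2 * j - m) n
  else if n ≤ i + j ∧ i + j ≤ m then curly (k + n - i) n
  else curly (k + n - m + j) n

def h2 (m n i j k : ℤ) : ℤ :=
  if j + k ≤ min m n then curly (i + j) m
  else if m ≤ j + k ∧ j + k ≤ n then curly (i + m - k) m
  else if n ≤ j + k ∧ j + k ≤ m then curly (i + k + 2 * j - n) m
  else curly (i + j + m - n) m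

def h3 (m n i j : ℤ) : ℤ :=
  if i + j ≤ min m n then i + j
  else if m ≤ i + j ∧ i + j ≤ n then m
  else if n ≤ i + j ∧ i + j ≤ m then n
  else m + n - i - j

/-- The `s`-th term in the sum defining the crystal energy. -/
def eterm (m n a b : ℤ) (p : ℕ → ℤ) (s : ℕ) : ℤ :=
  (h1 m n (p (2 * s + 1)) (p (2 * s)) (p (2 * s - 1))
    - h1 m n (barp m n a b (2 * s + 1)) (barp m n a b (2 * s)) (barp m n a b (2 * s - 1)))
  + (h2 m n (p (2 * s + 2)) (p (2 * s + 1)) (p (2 * s))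
    - h2 m n (barp m n a b (2 * s + 2)) (barp m n a b (2 * s + 1)) (barp m n a b (2 * s)))
  + 2 * (h3 m n (p (2 * s + 1)) (p (2 * s))
    - h3 m n (barp m n a b (2 * s + 1)) (barp m n a b (2 * s)))

/-- `H` is the crystal energy `h(p)`; the sum has finitely many nonzero terms, so the
partial sums are eventually constant. -/
def IsEnergy (m n a b : ℤ) (p : ℕ → ℤ) (H : ℤ) : Prop :=
  ∃ S0 : ℕ, ∀ S ≥ S0, H = -∑ s ∈ Finset.Icc 1 S, (s : ℤ) * eterm m n a b p s

/-- The RSOS path `r_p` read off from the weight sequence `A = a_p`. -/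
def rOf (m : ℤ) (A : ℕ → ℤ) (s : ℕ) : ℤ :=
  if s % 2 = 1 then A (2 * s - 1) else m - A (2 * s - 1)

theorem h1_eq_of_mem_Icc {m n i j : ℤ} (k : ℤ) (h : i + j ∈ Set.Icc n m) :
    h1 m n i j k = n - |k - i| := by
  obtain ⟨hn, hm⟩ := h
  unfold h1 curly
  rcases abs_cases (k - i) with ⟨habs, _⟩ | ⟨habs, _⟩ <;> rw [habs] <;> split_ifs <;> omega

theorem h2_eq_of_mem_Icc {m n i j k : ℤ} (h : j + k ∈ Set.Icc n m)
    (hsum : i + 2 * j + k = m + n) : h2 m n i j k = m := by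
  obtain ⟨hn, hm⟩ := h
  unfold h2 curly
  split_ifs <;> omega

theorem h3_eq_of_mem_Icc {m n i j : ℤ} (h : i + j ∈ Set.Icc n m) : h3 m n i j = n := by
  obtain ⟨hn, hm⟩ := h
  unfold h3
  split_ifs <;> omega

theorem h1_add_h2_add_two_mul_h3 {m n p₂ p₃ p₄ : ℤ} (p₁ : ℤ) (h : p₂ + p₃ ∈ Set.Icc n m)
    (hsum : p₂ + 2 * p₃ + p₄ = m + n) :
    h1 m n p₃ p₂ p₁ + h2 m n p₄ p₃ p₂ + 2 * h3 m n p₃ p₂ = m + 3 * n - |p₁ - p₃| := by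
  rw [add_comm] at h
  rw [h1_eq_of_mem_Icc p₁ h, h2_eq_of_mem_Icc h (by omega), h3_eq_of_mem_Icc h]
  ring

theorem barp_add_two_mul_add (m n a b : ℤ) (s : ℕ) :
    barp m n a b (2 * s) + 2 * barp m n a b (2 * s + 1) + barp m n a b (2 * s + 2) = m + n := by
  unfold barp
  split_ifs <;> omega

theorem barp_add_succ_mem_Icc {m n a : ℤ} (b : ℤ) (ha0 : 0 ≤ a) (ha1 : a ≤ m - n) (s : ℕ) :
    barp m n a b (2 * s) + barp m n a b (2 * s + 1) ∈ Set.Icc n m := by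
  unfold barp
  constructor <;> split_ifs <;> omega

theorem barp_two_mul_sub_one (m n a b : ℤ) {s : ℕ} (hs : 1 ≤ s) :
    barp m n a b (2 * s - 1) = barp m n a b (2 * s + 1) := by
  unfold barp
  split_ifs <;> omega

def WeightRec (m n : ℤ) (p A : ℕ → ℤ) : Prop :=
  ∀ t : ℕ, 1 ≤ t → A t = A (t + 1) + (if t % 2 = 1 then n else m) - 2 * p t

section AdmissiblePath

variable {m n : ℤ} {p A : ℕ → ℤ}

theorem AdmIneq.weight_succ_eq_of_even (hadm : AdmIneq m n p A) {u : ℕ} (hu : 1 ≤ u)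
    (heven : u % 2 = 0) : A (u + 1) = p u := by
  have h := hadm u hu
  rw [if_neg (by omega)] at h
  omega

theorem weight_eq_sub_of_even (hrec : WeightRec m n p A) (hadm : AdmIneq m n p A) {u : ℕ}
    (hu : 1 ≤ u) (heven : u % 2 = 0) : A u = m - p u := by
  have h := hrec u hu
  rw [if_neg (by omega), hadm.weight_succ_eq_of_even hu heven] at h
  omega

theorem path_add_two_mul_add (hrec : WeightRec m n p A) (hadm : AdmIneq m n p A) {u : ℕ}
    (hu : 1 ≤ u) (heven : u % 2 = 0) : p u + 2 * p (u + 1) + p (u + 2) = m + n := by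
  have h := hrec (u + 1) (by omega)
  rw [if_pos (by omega), hadm.weight_succ_eq_of_even hu heven,
    weight_eq_sub_of_even hrec hadm (u := u + 2) (by omega) (by omega)] at h
  omega

theorem path_add_succ_mem_Icc (hrec : WeightRec m n p A) (hadm : AdmIneq m n p A) {u : ℕ}
    (hu : 1 ≤ u) (heven : u % 2 = 0) : p u + p (u + 1) ∈ Set.Icc n m := by
  have h := hadm (u + 1) (by omega)
  rw [if_pos (by omega), weight_eq_sub_of_even hrec hadm (u := u + 2) (by omega) (by omega)]
    at h
  have := path_add_two_mul_add hrec hadm hu heven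
  constructor <;> omega

theorem abs_weight_sub_eq (hrec : WeightRec m n p A) (hadm : AdmIneq m n p A) {s : ℕ}
    (hs : 1 ≤ s) : |A (2 * s + 3) - A (2 * s - 1)| = 2 * |p (2 * s - 1) - p (2 * s + 1)| := by
  have hlast : A (2 * s + 3) = p (2 * s + 2) :=
    hadm.weight_succ_eq_of_even (u := 2 * s + 2) (by omega) (by omega)
  have hfirst := hrec (2 * s - 1) (by omega)
  rw [if_pos (by omega), Nat.sub_add_cancel (by omega),
    weight_eq_sub_of_even hrec hadm (u := 2 * s) (by omega) (by omega)] at hfirst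
  have hpath := path_add_two_mul_add hrec hadm (u := 2 * s) (by omega) (by omega)
  rw [show A (2 * s + 3) - A (2 * s - 1) = 2 * (p (2 * s - 1) - p (2 * s + 1)) by linarith,
    abs_mul, abs_two]

end AdmissiblePath

theorem abs_rOf_add_two_sub (m : ℤ) (A : ℕ → ℤ) (s : ℕ) :
    |rOf m A (s + 2) - rOf m A s| = |A (2 * s + 3) - A (2 * s - 1)| := by
  unfold rOf
  rw [show 2 * (s + 2) - 1 = 2 * s + 3 by omega]
  split_ifs
  · rfl
  · omega
  · omega
  · rw [show m - A (2 * s + 3) - (m - A (2 * s - 1)) = -(A (2 * s + 3) - A (2 * s - 1)) by ring,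
      abs_neg]

theorem eterm_eq_neg_abs {m n a : ℤ} (b : ℤ) {p A : ℕ → ℤ} (ha0 : 0 ≤ a) (ha1 : a ≤ m - n)
    (hrec : WeightRec m n p A) (hadm : AdmIneq m n p A) {s : ℕ} (hs : 1 ≤ s) :
    eterm m n a b p s = -|p (2 * s - 1) - p (2 * s + 1)| := by
  have hpath := h1_add_h2_add_two_mul_h3 (p (2 * s - 1))
    (path_add_succ_mem_Icc hrec hadm (u := 2 * s) (by omega) (by omega))
    (path_add_two_mul_add hrec hadm (u := 2 * s) (by omega) (by omega))
  have hground := h1_add_h2_add_two_mul_h3 (barp m n a b (2 * s - 1))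
    (barp_add_succ_mem_Icc b ha0 ha1 s) (barp_add_two_mul_add m n a b s)
  rw [barp_two_mul_sub_one m n a b hs, sub_self, abs_zero] at hground
  unfold eterm
  rw [barp_two_mul_sub_one m n a b hs]
  linarith

theorem stmt2_general (m n a b : ℤ)
    (ha0 : 0 ≤ a) (ha1 : a ≤ m - n)
    (p A : ℕ → ℤ)
    (hA : IsWeightSeq m n a b p A) (hadm : AdmIneq m n p A)
    (H : ℤ) (hH : IsEnergy m n a b p H) :
    ∃ S0 : ℕ, ∀ S ≥ S0,
      2 * H = ∑ s ∈ Finset.Icc 1 S, (s : ℤ) * |rOf m A (s + 2) - rOf m A s| := by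
  obtain ⟨S0, hS0⟩ := hH
  refine ⟨S0, fun S hS => ?_⟩
  rw [hS0 S hS, mul_neg, Finset.mul_sum, ← Finset.sum_neg_distrib]
  refine Finset.sum_congr rfl fun s hs => ?_
  have hs1 : 1 ≤ s := (Finset.mem_Icc.mp hs).1
  rw [abs_rOf_add_two_sub, abs_weight_sub_eq hA.1 hadm hs1,
    eterm_eq_neg_abs b ha0 ha1 hA.1 hadm hs1]
  ring

theorem stmt2 (m n a b : ℤ) (hmn : n < m) (hn : 1 ≤ n)
    (ha0 : 0 ≤ a) (ha1 : a ≤ m - n) (hb0 : 0 ≤ b) (hb1 : b ≤ n)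
    (p A : ℕ → ℤ) (hp : IsPath m n a b p)
    (hA : IsWeightSeq m n a b p A) (hadm : AdmIneq m n p A)
    (H : ℤ) (hH : IsEnergy m n a b p H) :
    ∃ S0 : ℕ, ∀ S ≥ S0,
      2 * H = ∑ s ∈ Finset.Icc 1 S, (s : ℤ) * |rOf m A (s + 2) - rOf m A s| :=
  stmt2_general m n a b ha0 ha1 p A hA hadm H hH

end Stmt2
end

section
/- For every admissible path p ∈ P_{a,b} and every s ≥ 1, one has n ≤ p(2s+1) + p(2s) ≤ m. -/
namespace Stmt3

/-- The ground-state path value `\bar p(s; a, b)`. -/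
def barp (m n a b : ℤ) (s : ℕ) : ℤ :=
  if s % 2 = 1 then n - b else if s % 4 = 0 then a + b else m - n - a + b

/-- Membership in the path space `P_{a,b}`. -/
def IsPath (m n a b : ℤ) (p : ℕ → ℤ) : Prop :=
  (∀ s : ℕ, 1 ≤ s → 0 ≤ p s ∧ p s ≤ (if s % 2 = 1 then n else m)) ∧
  ∃ S : ℕ, ∀ s ≥ S, p s = barp m n a b s

/-- The eventual (ground-state) weight sequence `ā(s)`. -/
def abar (m n a b : ℤ) (s : ℕ) : ℤ :=
  if s % 4 = 1 then a + b
  else if s % 4 = 2 then n + a - b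
  else if s % 4 = 3 then m - n - a + b
  else m - a - b

/-- `A` is the weight sequence `a_p` attached to the path `p`. -/
def IsWeightSeq (m n a b : ℤ) (p A : ℕ → ℤ) : Prop :=
  (∀ s : ℕ, 1 ≤ s → A s = A (s + 1) + (if s % 2 = 1 then n else m) - 2 * p s) ∧
  ∃ S : ℕ, ∀ s ≥ S, A s = abar m n a b s

/-- The admissibility inequalities for the weight sequence `A = a_p`. -/
def AdmIneq (m n : ℤ) (p A : ℕ → ℤ) : Prop :=
  ∀ s : ℕ, 1 ≤ s →
    p s ≤ A (s + 1) ∧ (if s % 2 = 1 then n else m) - p s ≤ m - A (s + 1)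

/-- `{a}_b` : `a` if `a ≤ b`, and `2b - a` if `a ≥ b`. -/
def curly (x c : ℤ) : ℤ := if x ≤ c then x else 2 * c - x

def h1 (m n i j k : ℤ) : ℤ :=
  if i + j ≤ min m n then curly (k + j) n
  else if m ≤ i + j ∧ i + j ≤ n then curly (k + i + 2 * j - m) n
  else if n ≤ i + j ∧ i + j ≤ m then curly (k + n - i) n
  else curly (k + n - m + j) n

def h2 (m n i j k : ℤ) : ℤ :=
  if j + k ≤ min m n then curly (i + j) m
  else if m ≤ j + k ∧ j + k ≤ n then curly (i + m - k) m
  else if n ≤ j + k ∧ j + k ≤ m then curly (i + k + 2 * j - n) m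
  else curly (i + j + m - n) m

def h3 (m n i j : ℤ) : ℤ :=
  if i + j ≤ min m n then i + j
  else if m ≤ i + j ∧ i + j ≤ n then m
  else if n ≤ i + j ∧ i + j ≤ m then n
  else m + n - i - j

/-- The `s`-th term in the sum defining the crystal energy. -/
def eterm (m n a b : ℤ) (p : ℕ → ℤ) (s : ℕ) : ℤ :=
  (h1 m n (p (2 * s + 1)) (p (2 * s)) (p (2 * s - 1))
    - h1 m n (barp m n a b (2 * s + 1)) (barp m n a b (2 * s)) (barp m n a b (2 * s - 1)))
  + (h2 m n (p (2 * s + 2)) (p (2 * s + 1)) (p (2 * s))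
    - h2 m n (barp m n a b (2 * s + 2)) (barp m n a b (2 * s + 1)) (barp m n a b (2 * s)))
  + 2 * (h3 m n (p (2 * s + 1)) (p (2 * s))
    - h3 m n (barp m n a b (2 * s + 1)) (barp m n a b (2 * s)))

/-- `H` is the crystal energy `h(p)`; the sum has finitely many nonzero terms, so the
partial sums are eventually constant. -/
def IsEnergy (m n a b : ℤ) (p : ℕ → ℤ) (H : ℤ) : Prop :=
  ∃ S0 : ℕ, ∀ S ≥ S0, H = -∑ s ∈ Finset.Icc 1 S, (s : ℤ) * eterm m n a b p s

/-- The RSOS path `r_p` read off from the weight sequence `A = a_p`. -/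
def rOf (m : ℤ) (A : ℕ → ℤ) (s : ℕ) : ℤ :=
  if s % 2 = 1 then A (2 * s - 1) else m - A (2 * s - 1)

/-!
At an even step both admissibility inequalities together force `a_p(2s+1) = p(2s)`. The
recursion at the odd step `2s+1` then gives `p(2s+1) + p(2s) = n + (a_p(2s+2) - p(2s+1))`, and
admissibility at `2s+1` says exactly `0 ≤ a_p(2s+2) - p(2s+1) ≤ m - n`.
-/

theorem IsWeightSeq.eq_at_odd {m n a b : ℤ} {p A : ℕ → ℤ} (hA : IsWeightSeq m n a b p A)
    (s : ℕ) : A (2 * s + 1) = A (2 * s + 2) + n - 2 * p (2 * s + 1) := by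
  simpa [Nat.add_mod] using hA.1 (2 * s + 1) (by omega)

theorem AdmIneq.weight_eq_at_even {m n : ℤ} {p A : ℕ → ℤ} (hadm : AdmIneq m n p A)
    {s : ℕ} (hs : 1 ≤ s) : A (2 * s + 1) = p (2 * s) := by
  have h := hadm (2 * s) (by omega)
  simp only [Nat.mul_mod_right, zero_ne_one, if_false] at h
  omega

theorem AdmIneq.bounds_at_odd {m n : ℤ} {p A : ℕ → ℤ} (hadm : AdmIneq m n p A) (s : ℕ) :
    p (2 * s + 1) ≤ A (2 * s + 2) ∧ A (2 * s + 2) ≤ m - n + p (2 * s + 1) := by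
  have h := hadm (2 * s + 1) (by omega)
  simp only [Nat.mul_add_mod_self_left, Nat.one_mod, if_true] at h
  exact ⟨h.1, by linarith [h.2]⟩

theorem stmt3_general (m n a b : ℤ)
    (p A : ℕ → ℤ)
    (hA : IsWeightSeq m n a b p A) (hadm : AdmIneq m n p A) :
    ∀ s : ℕ, 1 ≤ s → n ≤ p (2 * s + 1) + p (2 * s) ∧ p (2 * s + 1) + p (2 * s) ≤ m := by
  intro s hs
  have hrec := hA.eq_at_odd s
  have heven := hadm.weight_eq_at_even hs
  have hodd := hadm.bounds_at_odd s
  omega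

theorem stmt3 (m n a b : ℤ) (hmn : n < m) (hn : 1 ≤ n)
    (ha0 : 0 ≤ a) (ha1 : a ≤ m - n) (hb0 : 0 ≤ b) (hb1 : b ≤ n)
    (p A : ℕ → ℤ) (hp : IsPath m n a b p)
    (hA : IsWeightSeq m n a b p A) (hadm : AdmIneq m n p A) :
    ∀ s : ℕ, 1 ≤ s → n ≤ p (2 * s + 1) + p (2 * s) ∧ p (2 * s + 1) + p (2 * s) ≤ m :=
  stmt3_general m n a b p A hA hadm

end Stmt3
end

section
/- For every admissible path p ∈ P_{a,b} and every s ≥ 1: h1(p(2s+1), p(2s), p(2s−1)) = n − (1/2)·|r_p(s+2) − r_p(s)|, h2(p(2s+2), p(2s+1), p(2s)) = m, and h3(p(2s+1), p(2s)) = n. -/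
namespace Stmt4

/-- The ground-state path value `\bar p(s; a, b)`. -/
def barp (m n a b : ℤ) (s : ℕ) : ℤ :=
  if s % 2 = 1 then n - b else if s % 4 = 0 then a + b else m - n - a + b

/-- Membership in the path space `P_{a,b}`. -/
def IsPath (m n a b : ℤ) (p : ℕ → ℤ) : Prop :=
  (∀ s : ℕ, 1 ≤ s → 0 ≤ p s ∧ p s ≤ (if s % 2 = 1 then n else m)) ∧
  ∃ S : ℕ, ∀ s ≥ S, p s = barp m n a b s

/-- The eventual (ground-state) weight sequence `ā(s)`. -/
def abar (m n a b : ℤ) (s : ℕ) : ℤ :=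
  if s % 4 = 1 then a + b
  else if s % 4 = 2 then n + a - b
  else if s % 4 = 3 then m - n - a + b
  else m - a - b

/-- `A` is the weight sequence `a_p` attached to the path `p`. -/
def IsWeightSeq (m n a b : ℤ) (p A : ℕ → ℤ) : Prop :=
  (∀ s : ℕ, 1 ≤ s → A s = A (s + 1) + (if s % 2 = 1 then n else m) - 2 * p s) ∧
  ∃ S : ℕ, ∀ s ≥ S, A s = abar m n a b s

/-- The admissibility inequalities for the weight sequence `A = a_p`. -/
def AdmIneq (m n : ℤ) (p A : ℕ → ℤ) : Prop :=
  ∀ s : ℕ, 1 ≤ s →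
    p s ≤ A (s + 1) ∧ (if s % 2 = 1 then n else m) - p s ≤ m - A (s + 1)

/-- `{a}_b` : `a` if `a ≤ b`, and `2b - a` if `a ≥ b`. -/
def curly (x c : ℤ) : ℤ := if x ≤ c then x else 2 * c - x

def h1 (m n i j k : ℤ) : ℤ :=
  if i + j ≤ min m n then curly (k + j) n
  else if m ≤ i + j ∧ i + j ≤ n then curly (k + i + 2 * j - m) n
  else if n ≤ i + j ∧ i + j ≤ m then curly (k + n - i) n
  else curly (k + n - m + j) n

def h2 (m n i j k : ℤ) : ℤ :=
  if j + k ≤ min m n then curly (i + j) m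
  else if m ≤ j + k ∧ j + k ≤ n then curly (i + m - k) m
  else if n ≤ j + k ∧ j + k ≤ m then curly (i + k + 2 * j - n) m
  else curly (i + j + m - n) m

def h3 (m n i j : ℤ) : ℤ :=
  if i + j ≤ min m n then i + j
  else if m ≤ i + j ∧ i + j ≤ n then m
  else if n ≤ i + j ∧ i + j ≤ m then n
  else m + n - i - j

/-- The `s`-th term in the sum defining the crystal energy. -/
def eterm (m n a b : ℤ) (p : ℕ → ℤ) (s : ℕ) : ℤ :=
  (h1 m n (p (2 * s + 1)) (p (2 * s)) (p (2 * s - 1))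
    - h1 m n (barp m n a b (2 * s + 1)) (barp m n a b (2 * s)) (barp m n a b (2 * s - 1)))
  + (h2 m n (p (2 * s + 2)) (p (2 * s + 1)) (p (2 * s))
    - h2 m n (barp m n a b (2 * s + 2)) (barp m n a b (2 * s + 1)) (barp m n a b (2 * s)))
  + 2 * (h3 m n (p (2 * s + 1)) (p (2 * s))
    - h3 m n (barp m n a b (2 * s + 1)) (barp m n a b (2 * s)))

/-- `H` is the crystal energy `h(p)`; the sum has finitely many nonzero terms, so the
partial sums are eventually constant. -/
def IsEnergy (m n a b : ℤ) (p : ℕ → ℤ) (H : ℤ) : Prop :=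
  ∃ S0 : ℕ, ∀ S ≥ S0, H = -∑ s ∈ Finset.Icc 1 S, (s : ℤ) * eterm m n a b p s

/-- The RSOS path `r_p` read off from the weight sequence `A = a_p`. -/
def rOf (m : ℤ) (A : ℕ → ℤ) (s : ℕ) : ℤ :=
  if s % 2 = 1 then A (2 * s - 1) else m - A (2 * s - 1)

/-
Admissibility determines `a_p` locally: at even `s` it forces `a_p(s+1) = p(s)` and
`a_p(s) = m - p(s)`, and at odd `s` it gives `p(s) ≤ a_p(s+1) ≤ m - n + p(s)`. Hence
`n ≤ p(2s+1) + p(2s) ≤ m`, which puts `h1`, `h2`, `h3` in their third branch, and the recursion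
gives `a_p(2s+3) - a_p(2s-1) = 2 (p(2s-1) - p(2s+1))`. The identities then reduce to
`{n + d}_n = n - |d|` and `{m}_m = m`.
-/

theorem curly_self (c : ℤ) : curly c c = c := by
  simp [curly]

theorem curly_add (c d : ℤ) : curly (c + d) c = c - |d| := by
  unfold curly
  rcases abs_cases d with ⟨h, _⟩ | ⟨h, _⟩ <;> rw [h] <;> split_ifs <;> omega

theorem h1_of_le_of_le {m n i j : ℤ} (k : ℤ) (hlo : n ≤ i + j) (hhi : i + j ≤ m) :
    h1 m n i j k = n - |k - i| := by
  rw [← curly_add]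
  unfold h1
  split_ifs <;> congr 1 <;> omega

theorem h2_of_le_of_le {m n j k : ℤ} (i : ℤ) (hlo : n ≤ j + k) (hhi : j + k ≤ m) :
    h2 m n i j k = curly (i + k + 2 * j - n) m := by
  unfold h2
  split_ifs <;> congr 1 <;> omega

theorem h3_of_le_of_le {m n i j : ℤ} (hlo : n ≤ i + j) (hhi : i + j ≤ m) :
    h3 m n i j = n := by
  unfold h3
  split_ifs <;> omega

theorem abs_rOf_add_two_sub (m : ℤ) (A : ℕ → ℤ) (s : ℕ) :
    |rOf m A (s + 2) - rOf m A s| = |A (2 * s + 3) - A (2 * s - 1)| := by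
  have hidx : 2 * (s + 2) - 1 = 2 * s + 3 := by omega
  unfold rOf
  rw [hidx, Nat.add_mod_right]
  split_ifs
  · rfl
  · rw [← abs_neg]; ring_nf

theorem weight_of_even {m n : ℤ} {p A : ℕ → ℤ}
    (hrec : ∀ s : ℕ, 1 ≤ s → A s = A (s + 1) + (if s % 2 = 1 then n else m) - 2 * p s)
    (hadm : AdmIneq m n p A) {e : ℕ} (he : 1 ≤ e) (heven : e % 2 = 0) :
    A (e + 1) = p e ∧ A e = m - p e := by
  have hle := hadm e he
  have heq := hrec e he
  rw [if_neg (by omega)] at hle heq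
  constructor <;> omega

theorem weight_of_odd {m n : ℤ} {p A : ℕ → ℤ}
    (hrec : ∀ s : ℕ, 1 ≤ s → A s = A (s + 1) + (if s % 2 = 1 then n else m) - 2 * p s)
    (hadm : AdmIneq m n p A) {o : ℕ} (hodd : o % 2 = 1) :
    A o = A (o + 1) + n - 2 * p o ∧ p o ≤ A (o + 1) ∧ A (o + 1) ≤ m - n + p o := by
  have hle := hadm o (by omega)
  have heq := hrec o (by omega)
  rw [if_pos hodd] at hle heq
  omega

theorem stmt4_general (m n a b : ℤ)
    (p A : ℕ → ℤ)
    (hA : IsWeightSeq m n a b p A) (hadm : AdmIneq m n p A) :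
    ∀ s : ℕ, 1 ≤ s →
      2 * h1 m n (p (2 * s + 1)) (p (2 * s)) (p (2 * s - 1))
          = 2 * n - |rOf m A (s + 2) - rOf m A s| ∧
      h2 m n (p (2 * s + 2)) (p (2 * s + 1)) (p (2 * s)) = m ∧
      h3 m n (p (2 * s + 1)) (p (2 * s)) = n := by
  intro s hs
  obtain ⟨hrec, -⟩ := hA
  have hodd₀ := weight_of_odd hrec hadm (o := 2 * s - 1) (by omega)
  rw [Nat.sub_add_cancel (by omega)] at hodd₀
  have hodd₁ : A (2 * s + 1) = A (2 * s + 2) + n - 2 * p (2 * s + 1) ∧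
      p (2 * s + 1) ≤ A (2 * s + 2) ∧ A (2 * s + 2) ≤ m - n + p (2 * s + 1) :=
    weight_of_odd hrec hadm (by omega)
  have heven₀ := weight_of_even hrec hadm (e := 2 * s) (by omega) (by omega)
  have heven₁ : A (2 * s + 3) = p (2 * s + 2) ∧ A (2 * s + 2) = m - p (2 * s + 2) :=
    weight_of_even hrec hadm (by omega) (by omega)
  have hlo : n ≤ p (2 * s + 1) + p (2 * s) := by omega
  have hhi : p (2 * s + 1) + p (2 * s) ≤ m := by omega
  have hr : A (2 * s + 3) - A (2 * s - 1) = 2 * (p (2 * s - 1) - p (2 * s + 1)) := by omega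
  have hm : p (2 * s + 2) + p (2 * s) + 2 * p (2 * s + 1) - n = m := by omega
  refine ⟨?_, ?_, h3_of_le_of_le hlo hhi⟩
  · rw [h1_of_le_of_le _ hlo hhi, abs_rOf_add_two_sub, hr, abs_mul, abs_two]
    ring
  · rw [h2_of_le_of_le _ hlo hhi, hm, curly_self]

theorem stmt4 (m n a b : ℤ) (hmn : n < m) (hn : 1 ≤ n)
    (ha0 : 0 ≤ a) (ha1 : a ≤ m - n) (hb0 : 0 ≤ b) (hb1 : b ≤ n)
    (p A : ℕ → ℤ) (hp : IsPath m n a b p)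
    (hA : IsWeightSeq m n a b p A) (hadm : AdmIneq m n p A) :
    ∀ s : ℕ, 1 ≤ s →
      2 * h1 m n (p (2 * s + 1)) (p (2 * s)) (p (2 * s - 1))
          = 2 * n - |rOf m A (s + 2) - rOf m A s| ∧
      h2 m n (p (2 * s + 2)) (p (2 * s + 1)) (p (2 * s)) = m ∧
      h3 m n (p (2 * s + 1)) (p (2 * s)) = n :=
  stmt4_general m n a b p A hA hadm

end Stmt4
end

section
/- Let p ∈ P_{a,b}, let l ≥ 1, and suppose n − p(2l+1) > p(2l) and m − p(2l+2) ≤ p(2l+1). Let p' be the sequence equal to p except p'(2l+1) = p(2l+1) + 1. Then p' ∈ P_{a,b}, the four identities h1(p(2l+3),p(2l+2),p(2l+1)+1) − h1(p(2l+3),p(2l+2),p(2l+1)) = −1, h2(p(2l+2),p(2l+1)+1,p(2l)) − h2(p(2l+2),p(2l+1),p(2l)) = −1, h1(p(2l+1)+1,p(2l),p(2l−1)) − h1(p(2l+1),p(2l),p(2l−1)) = 0, and h3(p(2l+1)+1,p(2l)) − h3(p(2l+1),p(2l)) = 1 hold, and consequently h(p') = h(p) + 1. -/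
namespace Stmt6

/-- The ground-state path value `\bar p(s; a, b)`. -/
def barp (m n a b : ℤ) (s : ℕ) : ℤ :=
  if s % 2 = 1 then n - b else if s % 4 = 0 then a + b else m - n - a + b

/-- Membership in the path space `P_{a,b}`. -/
def IsPath (m n a b : ℤ) (p : ℕ → ℤ) : Prop :=
  (∀ s : ℕ, 1 ≤ s → 0 ≤ p s ∧ p s ≤ (if s % 2 = 1 then n else m)) ∧
  ∃ S : ℕ, ∀ s ≥ S, p s = barp m n a b s

/-- The eventual (ground-state) weight sequence `ā(s)`. -/
def abar (m n a b : ℤ) (s : ℕ) : ℤ :=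
  if s % 4 = 1 then a + b
  else if s % 4 = 2 then n + a - b
  else if s % 4 = 3 then m - n - a + b
  else m - a - b

/-- `A` is the weight sequence `a_p` attached to the path `p`. -/
def IsWeightSeq (m n a b : ℤ) (p A : ℕ → ℤ) : Prop :=
  (∀ s : ℕ, 1 ≤ s → A s = A (s + 1) + (if s % 2 = 1 then n else m) - 2 * p s) ∧
  ∃ S : ℕ, ∀ s ≥ S, A s = abar m n a b s

/-- The admissibility inequalities for the weight sequence `A = a_p`. -/
def AdmIneq (m n : ℤ) (p A : ℕ → ℤ) : Prop :=
  ∀ s : ℕ, 1 ≤ s →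
    p s ≤ A (s + 1) ∧ (if s % 2 = 1 then n else m) - p s ≤ m - A (s + 1)

/-- `{a}_b` : `a` if `a ≤ b`, and `2b - a` if `a ≥ b`. -/
def curly (x c : ℤ) : ℤ := if x ≤ c then x else 2 * c - x

def h1 (m n i j k : ℤ) : ℤ :=
  if i + j ≤ min m n then curly (k + j) n
  else if m ≤ i + j ∧ i + j ≤ n then curly (k + i + 2 * j - m) n
  else if n ≤ i + j ∧ i + j ≤ m then curly (k + n - i) n
  else curly (k + n - m + j) n

def h2 (m n i j k : ℤ) : ℤ :=
  if j + k ≤ min m n then curly (i + j) m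
  else if m ≤ j + k ∧ j + k ≤ n then curly (i + m - k) m
  else if n ≤ j + k ∧ j + k ≤ m then curly (i + k + 2 * j - n) m
  else curly (i + j + m - n) m

def h3 (m n i j : ℤ) : ℤ :=
  if i + j ≤ min m n then i + j
  else if m ≤ i + j ∧ i + j ≤ n then m
  else if n ≤ i + j ∧ i + j ≤ m then n
  else m + n - i - j

/-- The `s`-th term in the sum defining the crystal energy. -/
def eterm (m n a b : ℤ) (p : ℕ → ℤ) (s : ℕ) : ℤ :=
  (h1 m n (p (2 * s + 1)) (p (2 * s)) (p (2 * s - 1))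
    - h1 m n (barp m n a b (2 * s + 1)) (barp m n a b (2 * s)) (barp m n a b (2 * s - 1)))
  + (h2 m n (p (2 * s + 2)) (p (2 * s + 1)) (p (2 * s))
    - h2 m n (barp m n a b (2 * s + 2)) (barp m n a b (2 * s + 1)) (barp m n a b (2 * s)))
  + 2 * (h3 m n (p (2 * s + 1)) (p (2 * s))
    - h3 m n (barp m n a b (2 * s + 1)) (barp m n a b (2 * s)))

/-- `H` is the crystal energy `h(p)`; the sum has finitely many nonzero terms, so the
partial sums are eventually constant. -/
def IsEnergy (m n a b : ℤ) (p : ℕ → ℤ) (H : ℤ) : Prop :=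
  ∃ S0 : ℕ, ∀ S ≥ S0, H = -∑ s ∈ Finset.Icc 1 S, (s : ℤ) * eterm m n a b p s

/-- The RSOS path `r_p` read off from the weight sequence `A = a_p`. -/
def rOf (m : ℤ) (A : ℕ → ℤ) (s : ℕ) : ℤ :=
  if s % 2 = 1 then A (2 * s - 1) else m - A (2 * s - 1)

/-
Raising `p(2l+1)` by one only touches the energy terms with `s = l` and `s = l + 1`.
Since `p(2l) + p(2l+1) + 1 ≤ n < m`, at `s = l` all of `h1`, `h2`, `h3` are in their first
regime: `h1` does not see `i`, `h2 = {i+j}_m` is past its turning point because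
`i + j ≥ m`, and `h3 = i + j` grows. At `s = l + 1`, `p(2l+1) + p(2l+2) ≥ m > n` puts the
argument of `{·}_n` in `h1` past its turning point in every regime. The weighted change of
the energy is therefore `-(l · (0 - 1 + 2) + (l + 1) · (-1)) = 1`.
-/

lemma curly_add_one_of_le {x c : ℤ} (h : c ≤ x) : curly (x + 1) c = curly x c - 1 := by
  unfold curly; split_ifs <;> omega

lemma h1_add_one_right {m n i j k : ℤ} (hmn : n < m) (hjk : m ≤ j + k) :
    h1 m n i j (k + 1) = h1 m n i j k - 1 := by
  unfold h1
  split_ifs <;> rw [← curly_add_one_of_le (by omega)] <;> ring_nf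

lemma h1_add_one_left {m n i j k : ℤ} (hij : i + j + 1 ≤ min m n) :
    h1 m n (i + 1) j k = h1 m n i j k := by
  unfold h1
  rw [if_pos (by omega), if_pos (by omega)]

lemma h2_add_one_mid {m n i j k : ℤ} (hjk : j + k + 1 ≤ min m n) (hij : m ≤ i + j) :
    h2 m n i (j + 1) k = h2 m n i j k - 1 := by
  unfold h2
  rw [if_pos (by omega), if_pos (by omega), ← add_assoc, curly_add_one_of_le hij]

lemma h3_add_one_left {m n i j : ℤ} (hij : i + j + 1 ≤ min m n) :
    h3 m n (i + 1) j = h3 m n i j + 1 := by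
  unfold h3
  rw [if_pos (by omega), if_pos (by omega)]
  ring

lemma IsPath.update {m n a b : ℤ} {p : ℕ → ℤ} (hp : IsPath m n a b p) {t : ℕ} (ht : 1 ≤ t)
    {x : ℤ} (hx : 0 ≤ x ∧ x ≤ (if t % 2 = 1 then n else m)) :
    IsPath m n a b (Function.update p t x) := by
  obtain ⟨hbound, S, hS⟩ := hp
  refine ⟨fun s hs => ?_, max S (t + 1), fun s hs => ?_⟩
  · rcases eq_or_ne s t with rfl | hst
    · rwa [Function.update_self]
    · rw [Function.update_of_ne hst]
      exact hbound s hs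
  · rw [Function.update_of_ne (by omega)]
    exact hS s (by omega)

section UpdateOdd

variable (m n a b : ℤ) (p : ℕ → ℤ) (l : ℕ) (x : ℤ)

lemma eterm_update_odd_of_ne {s : ℕ} (hl : s ≠ l) (hl' : s ≠ l + 1) :
    eterm m n a b (Function.update p (2 * l + 1) x) s = eterm m n a b p s := by
  unfold eterm
  rw [Function.update_of_ne (by omega), Function.update_of_ne (by omega),
    Function.update_of_ne (by omega), Function.update_of_ne (by omega)]

lemma eterm_update_odd_sub_self :
    eterm m n a b (Function.update p (2 * l + 1) x) l - eterm m n a b p l =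
      (h1 m n x (p (2 * l)) (p (2 * l - 1))
        - h1 m n (p (2 * l + 1)) (p (2 * l)) (p (2 * l - 1)))
      + (h2 m n (p (2 * l + 2)) x (p (2 * l))
        - h2 m n (p (2 * l + 2)) (p (2 * l + 1)) (p (2 * l)))
      + 2 * (h3 m n x (p (2 * l)) - h3 m n (p (2 * l + 1)) (p (2 * l))) := by
  unfold eterm
  rw [Function.update_self, Function.update_of_ne (by omega), Function.update_of_ne (by omega),
    Function.update_of_ne (by omega)]
  ring

lemma eterm_succ_update_odd_sub_self :
    eterm m n a b (Function.update p (2 * l + 1) x) (l + 1) - eterm m n a b p (l + 1) =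
      h1 m n (p (2 * l + 3)) (p (2 * l + 2)) x
        - h1 m n (p (2 * l + 3)) (p (2 * l + 2)) (p (2 * l + 1)) := by
  have h2l : 2 * (l + 1) = 2 * l + 2 := by ring
  unfold eterm
  rw [h2l, show 2 * l + 2 - 1 = 2 * l + 1 by omega, Function.update_self,
    Function.update_of_ne (by omega), Function.update_of_ne (by omega),
    Function.update_of_ne (by omega)]
  ring

end UpdateOdd

lemma IsEnergy.sub_eq_of_eterm_eq_off {m n a b : ℤ} {p q : ℕ → ℤ} {H H' : ℤ}
    (hH : IsEnergy m n a b p H) (hH' : IsEnergy m n a b q H') {T : Finset ℕ}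
    (hT : ∀ s ∈ T, 1 ≤ s) (hpq : ∀ s ∉ T, eterm m n a b q s = eterm m n a b p s) :
    H' - H = -∑ s ∈ T, (s : ℤ) * (eterm m n a b q s - eterm m n a b p s) := by
  obtain ⟨S0, hS0⟩ := hH
  obtain ⟨S1, hS1⟩ := hH'
  set S := max (max S0 S1) (T.sup id)
  have hTS : T ⊆ Finset.Icc 1 S := fun s hs =>
    Finset.mem_Icc.2 ⟨hT s hs, le_trans (Finset.le_sup (f := id) hs) (le_max_right _ _)⟩
  rw [hS0 S (by omega), hS1 S (by omega),
    Finset.sum_subset hTS fun s _ hs => by rw [hpq s hs, sub_self, mul_zero]]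
  simp only [mul_sub, Finset.sum_sub_distrib]
  ring

theorem stmt6_general (m n a b : ℤ) (hmn : n < m)
    (p : ℕ → ℤ) (hp : IsPath m n a b p) (l : ℕ) (hl : 1 ≤ l)
    (hup : p (2 * l) < n - p (2 * l + 1))
    (hdown : m - p (2 * l + 2) ≤ p (2 * l + 1)) :
    IsPath m n a b (Function.update p (2 * l + 1) (p (2 * l + 1) + 1)) ∧
    h1 m n (p (2 * l + 3)) (p (2 * l + 2)) (p (2 * l + 1) + 1)
      - h1 m n (p (2 * l + 3)) (p (2 * l + 2)) (p (2 * l + 1)) = -1 ∧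
    h2 m n (p (2 * l + 2)) (p (2 * l + 1) + 1) (p (2 * l))
      - h2 m n (p (2 * l + 2)) (p (2 * l + 1)) (p (2 * l)) = -1 ∧
    h1 m n (p (2 * l + 1) + 1) (p (2 * l)) (p (2 * l - 1))
      - h1 m n (p (2 * l + 1)) (p (2 * l)) (p (2 * l - 1)) = 0 ∧
    h3 m n (p (2 * l + 1) + 1) (p (2 * l))
      - h3 m n (p (2 * l + 1)) (p (2 * l)) = 1 ∧
    (∀ H H' : ℤ, IsEnergy m n a b p H →
      IsEnergy m n a b (Function.update p (2 * l + 1) (p (2 * l + 1) + 1)) H' →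
      H' = H + 1) := by
  have hp0 := hp.1 (2 * l) (by omega)
  have hp1 := hp.1 (2 * l + 1) (by omega)
  simp only [show (2 * l) % 2 ≠ 1 by omega, show (2 * l + 1) % 2 = 1 by omega,
    if_true, if_false] at hp0 hp1
  have hmin : p (2 * l + 1) + p (2 * l) + 1 ≤ min m n := by omega
  have hmax : m ≤ p (2 * l + 2) + p (2 * l + 1) := by omega
  have I1 := h1_add_one_right (i := p (2 * l + 3)) hmn hmax
  have I2 := h2_add_one_mid (k := p (2 * l)) hmin hmax
  have I3 := h1_add_one_left (k := p (2 * l - 1)) hmin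
  have I4 := h3_add_one_left hmin
  refine ⟨hp.update (by omega) (by rw [if_pos (by omega)]; omega),
    by omega, by omega, by omega, by omega, fun H H' hH hH' => ?_⟩
  have hdiff := hH.sub_eq_of_eterm_eq_off hH' (T := {l, l + 1})
    (by simp only [Finset.mem_insert, Finset.mem_singleton]; omega) fun s hs => by
      simp only [Finset.mem_insert, Finset.mem_singleton, not_or] at hs
      exact eterm_update_odd_of_ne m n a b p l _ hs.1 hs.2
  rw [Finset.sum_pair (by omega), eterm_update_odd_sub_self,
    eterm_succ_update_odd_sub_self, I1, I2, I3, I4] at hdiff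
  push_cast at hdiff
  linarith

theorem stmt6 (m n a b : ℤ) (hmn : n < m) (hn : 1 ≤ n)
    (ha0 : 0 ≤ a) (ha1 : a ≤ m - n) (hb0 : 0 ≤ b) (hb1 : b ≤ n)
    (p : ℕ → ℤ) (hp : IsPath m n a b p) (l : ℕ) (hl : 1 ≤ l)
    (hup : p (2 * l) < n - p (2 * l + 1))
    (hdown : m - p (2 * l + 2) ≤ p (2 * l + 1)) :
    IsPath m n a b (Function.update p (2 * l + 1) (p (2 * l + 1) + 1)) ∧
    h1 m n (p (2 * l + 3)) (p (2 * l + 2)) (p (2 * l + 1) + 1)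
      - h1 m n (p (2 * l + 3)) (p (2 * l + 2)) (p (2 * l + 1)) = -1 ∧
    h2 m n (p (2 * l + 2)) (p (2 * l + 1) + 1) (p (2 * l))
      - h2 m n (p (2 * l + 2)) (p (2 * l + 1)) (p (2 * l)) = -1 ∧
    h1 m n (p (2 * l + 1) + 1) (p (2 * l)) (p (2 * l - 1))
      - h1 m n (p (2 * l + 1)) (p (2 * l)) (p (2 * l - 1)) = 0 ∧
    h3 m n (p (2 * l + 1) + 1) (p (2 * l))
      - h3 m n (p (2 * l + 1)) (p (2 * l)) = 1 ∧
    (∀ H H' : ℤ, IsEnergy m n a b p H →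
      IsEnergy m n a b (Function.update p (2 * l + 1) (p (2 * l + 1) + 1)) H' →
      H' = H + 1) :=
  stmt6_general m n a b hmn p hp l hl hup hdown

end Stmt6
end

section
/- The map p ↦ r_p is a bijection from the set of admissible paths in P_{a,b} onto the RSOS path space R_{a,b}. -/
namespace Stmt9

/-- The ground-state path value `\bar p(s; a, b)`. -/
def barp (m n a b : ℤ) (s : ℕ) : ℤ :=
  if s % 2 = 1 then n - b else if s % 4 = 0 then a + b else m - n - a + b

/-- Membership in the path space `P_{a,b}` (sequences indexed by `s ≥ 1`, represented by
functions on `ℕ` vanishing at `0`). -/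
def IsPath (m n a b : ℤ) (p : ℕ → ℤ) : Prop :=
  p 0 = 0 ∧
  (∀ s : ℕ, 1 ≤ s → 0 ≤ p s ∧ p s ≤ (if s % 2 = 1 then n else m)) ∧
  ∃ S : ℕ, ∀ s ≥ S, p s = barp m n a b s

/-- The eventual (ground-state) weight sequence `ā(s)`. -/
def abar (m n a b : ℤ) (s : ℕ) : ℤ :=
  if s % 4 = 1 then a + b
  else if s % 4 = 2 then n + a - b
  else if s % 4 = 3 then m - n - a + b
  else m - a - b

/-- `A` is the weight sequence `a_p` attached to the path `p`. -/
def IsWeightSeq (m n a b : ℤ) (p A : ℕ → ℤ) : Prop :=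
  (∀ s : ℕ, 1 ≤ s → A s = A (s + 1) + (if s % 2 = 1 then n else m) - 2 * p s) ∧
  ∃ S : ℕ, ∀ s ≥ S, A s = abar m n a b s

/-- `p` is an admissible path of `P_{a,b}`. -/
def IsAdmissiblePath (m n a b : ℤ) (p : ℕ → ℤ) : Prop :=
  IsPath m n a b p ∧
  ∃ A : ℕ → ℤ, IsWeightSeq m n a b p A ∧
    ∀ s : ℕ, 1 ≤ s →
      p s ≤ A (s + 1) ∧ (if s % 2 = 1 then n else m) - p s ≤ m - A (s + 1)

/-- Membership in the RSOS path space `R_{a,b}` (again represented by functions on `ℕ`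
vanishing at `0`). -/
def InRSOS (m n a b : ℤ) (r : ℕ → ℤ) : Prop :=
  r 0 = 0 ∧
  (∀ s : ℕ, 1 ≤ s → 0 ≤ r s ∧ r s ≤ m) ∧
  (∀ s : ℕ, 1 ≤ s → ∃ j : ℤ, 0 ≤ j ∧ j ≤ n ∧ r (s + 1) - r s = -n + 2 * j) ∧
  (∀ s : ℕ, 1 ≤ s → n ≤ r (s + 1) + r s ∧ r (s + 1) + r s ≤ 2 * m - n) ∧
  ∃ S : ℕ, ∀ s ≥ S, r s = if s % 2 = 1 then a + b else a + n - b

/-- `r` is the RSOS path `r_p` read off from the path `p`: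
`r_p(s) = a_p(2s-1)` for odd `s` and `m - a_p(2s-1)` for even `s`. -/
def RelR (m n a b : ℤ) (p r : ℕ → ℤ) : Prop :=
  r 0 = 0 ∧
  ∃ A : ℕ → ℤ, IsWeightSeq m n a b p A ∧
    ∀ s : ℕ, 1 ≤ s →
      r s = if s % 2 = 1 then A (2 * s - 1) else m - A (2 * s - 1)

/-!
At an even site `2k` of an admissible path the two constraints are opposite inequalities, so
`p(2k) = a_p(2k+1)` and then `a_p(2k) = m - a_p(2k+1)`. Hence a path and its weights are
determined by the odd-site weights `w k = a_p(2k-1)`, and the remaining conditions say exactly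
that `w k + w (k+1) = m + n - 2 p(2k-1)` with `0 ≤ p(2k-1) ≤ n` and `|w (k+1) - w k| ≤ m - n`.
Reflecting `x ↦ m - x` at even `k` turns these into the RSOS conditions on `r_p`, and the
reflection is an involution.
-/

open Filter

theorem forall_of_two_mul_sub_one_of_two_mul {P : ℕ → Prop}
    (hodd : ∀ k, 1 ≤ k → P (2 * k - 1)) (heven : ∀ k, 1 ≤ k → P (2 * k)) :
    ∀ t, 1 ≤ t → P t := by
  intro t ht
  obtain ⟨k, rfl | rfl⟩ := Nat.even_or_odd' t
  · exact heven k (by omega)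
  · simpa [Nat.mul_add] using hodd (k + 1) (by omega)

theorem eventually_of_two_mul_sub_one_of_two_mul {P : ℕ → Prop}
    (hodd : ∀ᶠ k in atTop, P (2 * k - 1)) (heven : ∀ᶠ k in atTop, P (2 * k)) :
    ∀ᶠ t in atTop, P t := by
  obtain ⟨K, hK⟩ := eventually_atTop.1 (hodd.and heven)
  refine eventually_atTop.2 ⟨2 * K, fun t ht => ?_⟩
  obtain ⟨k, rfl | rfl⟩ := Nat.even_or_odd' t
  · exact (hK k (by omega)).2
  · simpa [Nat.mul_add] using (hK (k + 1) (by omega)).1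

section

variable {m n a b : ℤ} {p A A' r w : ℕ → ℤ}

theorem IsWeightSeq.eq_of_one_le (hA : IsWeightSeq m n a b p A)
    (hA' : IsWeightSeq m n a b p A') {s : ℕ} (hs : 1 ≤ s) : A s = A' s := by
  obtain ⟨hrec, S, hS⟩ := hA
  obtain ⟨hrec', S', hS'⟩ := hA'
  have hconst : ∀ k, A (s + k) - A' (s + k) = A s - A' s := by
    intro k
    induction k with
    | zero => rfl
    | succ k ih =>
      have := hrec (s + k) (by omega)
      have := hrec' (s + k) (by omega)
      rw [← ih, ← add_assoc]
      linarith
  have h := hconst (S + S')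
  rw [hS _ (by omega), hS' _ (by omega)] at h
  linarith

-- `A 0` is not determined by the path, hence the normalisation at `k = 0`.
def oddWeights (A : ℕ → ℤ) (k : ℕ) : ℤ :=
  if k = 0 then 0 else A (2 * k - 1)

@[simp]
theorem oddWeights_zero : oddWeights A 0 = 0 := rfl

theorem oddWeights_of_ne_zero {k : ℕ} (hk : k ≠ 0) : oddWeights A k = A (2 * k - 1) :=
  if_neg hk

theorem oddWeights_succ (k : ℕ) : oddWeights A (k + 1) = A (2 * k + 1) := by
  simp [oddWeights, Nat.mul_add]

theorem IsWeightSeq.oddWeights_eq (hA : IsWeightSeq m n a b p A)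
    (hA' : IsWeightSeq m n a b p A') : oddWeights A = oddWeights A' := by
  funext k
  unfold oddWeights
  split_ifs with hk
  · rfl
  · exact hA.eq_of_one_le hA' (by omega)

/-- `r_p = reflectEven m (oddWeights a_p)`. -/
def reflectEven (m : ℤ) (f : ℕ → ℤ) (s : ℕ) : ℤ :=
  if s = 0 then 0 else if s % 2 = 1 then f s else m - f s

theorem reflectEven_reflectEven (h : r 0 = 0) : reflectEven m (reflectEven m r) = r := by
  funext s
  unfold reflectEven
  split_ifs with hs <;> simp_all

theorem relR_iff (hA : IsWeightSeq m n a b p A) :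
    RelR m n a b p r ↔ r = reflectEven m (oddWeights A) := by
  constructor
  · rintro ⟨hr0, A', hA', hr⟩
    rw [hA.oddWeights_eq hA']
    funext s
    unfold reflectEven oddWeights
    split_ifs with hs
    · subst hs; exact hr0
    all_goals simp_all [hr s (by omega)]
  · rintro rfl
    refine ⟨rfl, A, hA, fun s hs => ?_⟩
    simp [reflectEven, oddWeights, show s ≠ 0 by omega]

/-- The sequences `k ↦ a_p(2k - 1)` for admissible paths `p`. -/
def IsOddWeightSeq (m n a b : ℤ) (w : ℕ → ℤ) : Prop :=
  (∀ k, 1 ≤ k → ∃ j, 0 ≤ j ∧ j ≤ n ∧ w k + w (k + 1) = m + n - 2 * j) ∧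
  (∀ k, 1 ≤ k → w (k + 1) - w k ≤ m - n ∧ w k - w (k + 1) ≤ m - n) ∧
  ∀ᶠ k in atTop, w k = if k % 2 = 1 then a + b else m - n - a + b

theorem inRSOS_reflectEven_iff :
    InRSOS m n a b (reflectEven m w) ↔ IsOddWeightSeq m n a b w := by
  have hval : ∀ s, 1 ≤ s → reflectEven m w s = if s % 2 = 1 then w s else m - w s :=
    fun s hs => if_neg (by omega)
  constructor
  · rintro ⟨-, -, hstep, hsum, hev⟩
    refine ⟨fun k hk => ?_, fun k hk => ?_, ?_⟩
    · obtain ⟨j, hj0, hjn, hj⟩ := hstep k hk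
      rw [hval k hk, hval (k + 1) (by omega)] at hj
      -- at even sites the roles of `j` and `n - j` are exchanged
      refine ⟨if k % 2 = 1 then j else n - j, ?_⟩
      split_ifs at hj ⊢ <;> omega
    · have h := hsum k hk
      rw [hval k hk, hval (k + 1) (by omega)] at h
      split_ifs at h <;> omega
    · filter_upwards [eventually_atTop.2 hev, eventually_ge_atTop 1] with k hk hk1
      rw [hval k hk1] at hk
      split_ifs at hk ⊢ <;> omega
  · rintro ⟨hstep, hdiff, hev⟩
    refine ⟨rfl, fun s hs => ?_, fun s hs => ?_, fun s hs => ?_, eventually_atTop.1 ?_⟩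
    · obtain ⟨j, hj0, hjn, hj⟩ := hstep s hs
      have h := hdiff s hs
      rw [hval s hs]
      split_ifs <;> omega
    · obtain ⟨j, hj0, hjn, hj⟩ := hstep s hs
      rw [hval s hs, hval (s + 1) (by omega)]
      refine ⟨if s % 2 = 1 then j else n - j, ?_⟩
      split_ifs <;> omega
    · have h := hdiff s hs
      rw [hval s hs, hval (s + 1) (by omega)]
      split_ifs <;> omega
    · filter_upwards [hev, eventually_ge_atTop 1] with s hs hs1
      rw [hval s hs1]
      split_ifs at hs ⊢ <;> omega

/-- In an admissible path the two constraints at an even site force `p(2k) = a_p(2k+1)`. -/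
theorem IsAdmissiblePath.step (h : IsAdmissiblePath m n a b p) (hA : IsWeightSeq m n a b p A)
    {k : ℕ} (hk : 1 ≤ k) :
    p (2 * k) = A (2 * k + 1) ∧ A (2 * k - 1) + A (2 * k + 1) = m + n - 2 * p (2 * k - 1) ∧
      0 ≤ p (2 * k - 1) ∧ p (2 * k - 1) ≤ n ∧
      p (2 * k - 1) ≤ m - A (2 * k + 1) ∧ n - p (2 * k - 1) ≤ A (2 * k + 1) := by
  obtain ⟨hp, A', hA', hc⟩ := h
  have hsucc : 2 * k - 1 + 1 = 2 * k := by omega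
  have hrec₁ := hA.1 (2 * k - 1) (by omega)
  have hrec₂ := hA.1 (2 * k) (by omega)
  have hc₁ := hc (2 * k - 1) (by omega)
  have hc₂ := hc (2 * k) (by omega)
  have hb := hp.2.1 (2 * k - 1) (by omega)
  rw [hsucc] at hrec₁ hc₁
  rw [hA'.eq_of_one_le hA (by omega)] at hc₁ hc₂
  simp only [show (2 * k - 1) % 2 = 1 by omega, show ¬(2 * k) % 2 = 1 by omega,
    if_true, if_false] at hrec₁ hrec₂ hc₁ hc₂ hb
  omega

theorem IsAdmissiblePath.isOddWeightSeq (h : IsAdmissiblePath m n a b p)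
    (hA : IsWeightSeq m n a b p A) : IsOddWeightSeq m n a b (oddWeights A) := by
  refine ⟨fun k hk => ?_, fun k hk => ?_, ?_⟩
  · obtain ⟨-, hsum, hj0, hjn, -⟩ := h.step hA hk
    refine ⟨p (2 * k - 1), hj0, hjn, ?_⟩
    rw [oddWeights_succ, oddWeights_of_ne_zero (by omega)]
    omega
  · obtain ⟨-, hsum, -, -, hj₁, hj₂⟩ := h.step hA hk
    rw [oddWeights_succ, oddWeights_of_ne_zero (by omega)]
    omega
  · obtain ⟨S, hS⟩ := hA.2
    refine eventually_atTop.2 ⟨S + 1, fun k hk => ?_⟩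
    rw [oddWeights_of_ne_zero (by omega), hS _ (by omega)]
    unfold abar
    split_ifs <;> omega

/- The admissible path with odd-site weights `w` and its weight sequence:
`p(2k-1) = (m + n - w k - w (k+1)) / 2`, `p(2k) = w (k+1)`,
`a(2k-1) = w k`, `a(2k) = m - w (k+1)`. -/
def pathOf (m n : ℤ) (w : ℕ → ℤ) (t : ℕ) : ℤ :=
  if t = 0 then 0
  else if t % 2 = 1 then (m + n - w ((t + 1) / 2) - w ((t + 1) / 2 + 1)) / 2 else w (t / 2 + 1)

def weightsOf (m : ℤ) (w : ℕ → ℤ) (t : ℕ) : ℤ :=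
  if t % 2 = 1 then w ((t + 1) / 2) else m - w (t / 2 + 1)

theorem pathOf_two_mul_sub_one {k : ℕ} (hk : 1 ≤ k) :
    pathOf m n w (2 * k - 1) = (m + n - w k - w (k + 1)) / 2 := by
  rw [pathOf, if_neg (by omega), if_pos (by omega), show (2 * k - 1 + 1) / 2 = k by omega]

theorem pathOf_two_mul {k : ℕ} (hk : 1 ≤ k) : pathOf m n w (2 * k) = w (k + 1) := by
  rw [pathOf, if_neg (by omega), if_neg (by omega), show 2 * k / 2 = k by omega]

theorem weightsOf_two_mul_sub_one {k : ℕ} (hk : 1 ≤ k) : weightsOf m w (2 * k - 1) = w k := by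
  rw [weightsOf, if_pos (by omega), show (2 * k - 1 + 1) / 2 = k by omega]

theorem weightsOf_two_mul_add_one (k : ℕ) : weightsOf m w (2 * k + 1) = w (k + 1) := by
  rw [weightsOf, if_pos (by omega), show (2 * k + 1 + 1) / 2 = k + 1 by omega]

theorem weightsOf_two_mul (k : ℕ) : weightsOf m w (2 * k) = m - w (k + 1) := by
  rw [weightsOf, if_neg (by omega), show 2 * k / 2 = k by omega]

theorem oddWeights_weightsOf (h : w 0 = 0) : oddWeights (weightsOf m w) = w := by
  funext k
  rcases Nat.eq_zero_or_pos k with rfl | hk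
  · exact h.symm
  · rw [oddWeights_of_ne_zero (by omega), weightsOf_two_mul_sub_one hk]

theorem IsAdmissiblePath.eq_pathOf (h : IsAdmissiblePath m n a b p)
    (hA : IsWeightSeq m n a b p A) : p = pathOf m n (oddWeights A) := by
  funext t
  rcases Nat.eq_zero_or_pos t with rfl | ht
  · exact h.1.1
  refine forall_of_two_mul_sub_one_of_two_mul (P := fun t => p t = pathOf m n (oddWeights A) t)
    (fun k hk => ?_) (fun k hk => ?_) t ht
  · obtain ⟨-, hsum, -⟩ := h.step hA hk
    rw [pathOf_two_mul_sub_one hk, oddWeights_of_ne_zero (by omega), oddWeights_succ]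
    omega
  · rw [pathOf_two_mul hk, oddWeights_succ]
    exact (h.step hA hk).1

theorem IsOddWeightSeq.isWeightSeq (hw : IsOddWeightSeq m n a b w) :
    IsWeightSeq m n a b (pathOf m n w) (weightsOf m w) := by
  refine ⟨forall_of_two_mul_sub_one_of_two_mul (fun k hk => ?_) (fun k hk => ?_),
    eventually_atTop.1 (eventually_of_two_mul_sub_one_of_two_mul ?_ ?_)⟩
  · obtain ⟨j, -, -, hj⟩ := hw.1 k hk
    rw [show 2 * k - 1 + 1 = 2 * k by omega, weightsOf_two_mul_sub_one hk, weightsOf_two_mul,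
      pathOf_two_mul_sub_one hk, if_pos (by omega)]
    omega
  · rw [weightsOf_two_mul, weightsOf_two_mul_add_one, pathOf_two_mul hk, if_neg (by omega)]
    ring
  · filter_upwards [hw.2.2, eventually_ge_atTop 1] with k hk hk1
    rw [weightsOf_two_mul_sub_one hk1, hk]
    unfold abar
    split_ifs <;> omega
  · filter_upwards [(tendsto_add_atTop_nat 1).eventually hw.2.2] with k hk
    rw [weightsOf_two_mul, hk]
    unfold abar
    split_ifs <;> omega

theorem IsOddWeightSeq.isAdmissiblePath_pathOf (hw : IsOddWeightSeq m n a b w) :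
    IsAdmissiblePath m n a b (pathOf m n w) := by
  have hws := hw.isWeightSeq
  obtain ⟨hstep, hdiff, hev⟩ := hw
  refine ⟨⟨rfl, forall_of_two_mul_sub_one_of_two_mul (fun k hk => ?_) (fun k hk => ?_),
      eventually_atTop.1 (eventually_of_two_mul_sub_one_of_two_mul ?_ ?_)⟩,
    weightsOf m w, hws,
    forall_of_two_mul_sub_one_of_two_mul (fun k hk => ?_) (fun k hk => ?_)⟩
  · obtain ⟨j, hj0, hjn, hj⟩ := hstep k hk
    rw [pathOf_two_mul_sub_one hk, if_pos (by omega)]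
    omega
  · obtain ⟨j, hj0, hjn, hj⟩ := hstep (k + 1) (by omega)
    have h := hdiff (k + 1) (by omega)
    rw [pathOf_two_mul hk, if_neg (by omega)]
    omega
  · filter_upwards [hev, (tendsto_add_atTop_nat 1).eventually hev, eventually_ge_atTop 1]
      with k h₁ h₂ hk
    rw [pathOf_two_mul_sub_one hk, h₁, h₂]
    unfold barp
    split_ifs <;> omega
  · filter_upwards [(tendsto_add_atTop_nat 1).eventually hev, eventually_ge_atTop 1] with k h hk
    rw [pathOf_two_mul hk, h]
    unfold barp
    split_ifs <;> omega
  · obtain ⟨j, hj0, hjn, hj⟩ := hstep k hk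
    have h := hdiff k hk
    rw [show 2 * k - 1 + 1 = 2 * k by omega, pathOf_two_mul_sub_one hk, weightsOf_two_mul,
      if_pos (by omega)]
    omega
  · rw [pathOf_two_mul hk, weightsOf_two_mul_add_one, if_neg (by omega)]
    omega

end

theorem stmt9_general (m n a b : ℤ) :
    (∀ p : ℕ → ℤ, IsAdmissiblePath m n a b p →
      ∃! r : ℕ → ℤ, InRSOS m n a b r ∧ RelR m n a b p r) ∧
    (∀ r : ℕ → ℤ, InRSOS m n a b r →
      ∃! p : ℕ → ℤ, IsAdmissiblePath m n a b p ∧ RelR m n a b p r) := by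
  refine ⟨fun p hp => ?_, fun r hr => ?_⟩
  · obtain ⟨A, hA, -⟩ := hp.2
    refine ⟨reflectEven m (oddWeights A), ⟨?_, (relR_iff hA).2 rfl⟩,
      fun r ⟨_, hr⟩ => (relR_iff hA).1 hr⟩
    exact inRSOS_reflectEven_iff.2 (hp.isOddWeightSeq hA)
  · have hw : IsOddWeightSeq m n a b (reflectEven m r) := by
      rw [← inRSOS_reflectEven_iff, reflectEven_reflectEven hr.1]
      exact hr
    refine ⟨pathOf m n (reflectEven m r), ⟨hw.isAdmissiblePath_pathOf, ?_⟩, ?_⟩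
    · rw [relR_iff hw.isWeightSeq, oddWeights_weightsOf (w := reflectEven m r) rfl,
        reflectEven_reflectEven hr.1]
    · rintro p ⟨hp, hrel⟩
      obtain ⟨A, hA, -⟩ := hp.2
      rw [hp.eq_pathOf hA, (relR_iff hA).1 hrel, reflectEven_reflectEven oddWeights_zero]

/-- The map `p ↦ r_p` is a bijection from the set of admissible paths in `P_{a,b}` onto
`R_{a,b}`. -/
theorem stmt9 (m n a b : ℤ) (hmn : n < m) (hn : 1 ≤ n)
    (ha0 : 0 ≤ a) (ha1 : a ≤ m - n) (hb0 : 0 ≤ b) (hb1 : b ≤ n) :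
    (∀ p : ℕ → ℤ, IsAdmissiblePath m n a b p →
      ∃! r : ℕ → ℤ, InRSOS m n a b r ∧ RelR m n a b p r) ∧
    (∀ r : ℕ → ℤ, InRSOS m n a b r →
      ∃! p : ℕ → ℤ, IsAdmissiblePath m n a b p ∧ RelR m n a b p r) :=
  stmt9_general m n a b

end Stmt9
end

section
/- Let k, l ≥ 1 be integers and define a map R on pairs of integers (i,j) with 0 ≤ i ≤ k, 0 ≤ j ≤ l by: R(i,j) = (i, j) if i+j ≤ min(k,l); R(i,j) = (2i+j−k, k−i) if k ≤ i+j ≤ l; R(i,j) = (l−j, i+2j−l) if l ≤ i+j ≤ k; R(i,j) = (l−k+i, j+k−l) if i+j ≥ max(k,l). Then: (1) wherever two cases both apply they give the same value, so R is well defined; (2) R(i,j) = (i',j') satisfies 0 ≤ i' ≤ l, 0 ≤ j' ≤ k, and i' + j' = i + j; (3) R is a bijection from {0,…,k}×{0,…,l} onto {0,…,l}×{0,…,k}, whose inverse is the analogous map with the roles of k and l interchanged. -/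
/-!
With `s = i + j`, all four cases of `R` are the single formula
`R(i, j) = (i + (s - k)₊ - (s - l)₊, j - (s - k)₊ + (s - l)₊)`, which is defined for every
pair and visibly preserves `s`. Interchanging `k` and `l` negates the shift
`(s - k)₊ - (s - l)₊`, so the map for `(l, k)` undoes the map for `(k, l)`.
-/

namespace Stmt10

/-- The index set `{0,…,k} × {0,…,l}` of the crystal `B^{(k)} ⊗ B^{(l)}`. -/
def dom (k l : ℤ) : Set (ℤ × ℤ) := {x | 0 ≤ x.1 ∧ x.1 ≤ k ∧ 0 ≤ x.2 ∧ x.2 ≤ l}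

/-- The (graph of the) normalised combinatorial `R`-matrix
`B^{(k)} ⊗ B^{(l)} → B^{(l)} ⊗ B^{(k)}`, given case by case. -/
def Rrel (k l : ℤ) (x y : ℤ × ℤ) : Prop :=
  (x.1 + x.2 ≤ min k l ∧ y = x) ∨
  (k ≤ x.1 + x.2 ∧ x.1 + x.2 ≤ l ∧ y = (2 * x.1 + x.2 - k, k - x.1)) ∨
  (l ≤ x.1 + x.2 ∧ x.1 + x.2 ≤ k ∧ y = (l - x.2, x.1 + 2 * x.2 - l)) ∨
  (max k l ≤ x.1 + x.2 ∧ y = (l - k + x.1, x.2 + k - l))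

def rMap (k l : ℤ) (x : ℤ × ℤ) : ℤ × ℤ :=
  (x.1 + max 0 (x.1 + x.2 - k) - max 0 (x.1 + x.2 - l),
   x.2 - max 0 (x.1 + x.2 - k) + max 0 (x.1 + x.2 - l))

theorem rrel_iff_eq_rMap (k l : ℤ) (x y : ℤ × ℤ) : Rrel k l x y ↔ y = rMap k l x := by
  simp only [Rrel, rMap, Prod.ext_iff]
  omega

theorem rMap_fst_add_snd (k l : ℤ) (x : ℤ × ℤ) :
    (rMap k l x).1 + (rMap k l x).2 = x.1 + x.2 := by
  simp only [rMap]
  ring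

theorem rMap_mem_dom {k l : ℤ} {x : ℤ × ℤ} (hx : x ∈ dom k l) : rMap k l x ∈ dom l k := by
  obtain ⟨h0, h1, h2, h3⟩ := hx
  simp only [dom, rMap, Set.mem_ofPred_eq]
  omega

theorem rMap_rMap (k l : ℤ) (x : ℤ × ℤ) : rMap l k (rMap k l x) = x := by
  simp only [rMap, Prod.ext_iff]
  omega

theorem eq_rMap_iff (k l : ℤ) (x y : ℤ × ℤ) : y = rMap k l x ↔ x = rMap l k y := by
  constructor
  · rintro rfl
    exact (rMap_rMap k l x).symm
  · rintro rfl
    exact (rMap_rMap l k y).symm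

theorem stmt10_general (k l : ℤ) :
    -- (1) wherever two cases both apply they agree, so `R` is a well-defined map on `dom k l`
    (∀ x ∈ dom k l, ∃! y : ℤ × ℤ, Rrel k l x y) ∧
    -- (2) the image lies in `dom l k` and `i' + j' = i + j`
    (∀ x ∈ dom k l, ∀ y : ℤ × ℤ, Rrel k l x y →
      y ∈ dom l k ∧ y.1 + y.2 = x.1 + x.2) ∧
    -- (3) `R` is a bijection of `dom k l` onto `dom l k`, with inverse the analogous map
    -- with the roles of `k` and `l` interchanged
    (∀ x ∈ dom k l, ∀ y ∈ dom l k, (Rrel k l x y ↔ Rrel l k y x)) := by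
  simp only [rrel_iff_eq_rMap]
  refine ⟨fun x _ => existsUnique_eq, ?_, fun x _ y _ => eq_rMap_iff k l x y⟩
  rintro x hx y rfl
  exact ⟨rMap_mem_dom hx, rMap_fst_add_snd k l x⟩

theorem stmt10 (k l : ℤ) (hk : 1 ≤ k) (hl : 1 ≤ l) :
    -- (1) wherever two cases both apply they agree, so `R` is a well-defined map on `dom k l`
    (∀ x ∈ dom k l, ∃! y : ℤ × ℤ, Rrel k l x y) ∧
    -- (2) the image lies in `dom l k` and `i' + j' = i + j`
    (∀ x ∈ dom k l, ∀ y : ℤ × ℤ, Rrel k l x y →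
      y ∈ dom l k ∧ y.1 + y.2 = x.1 + x.2) ∧
    -- (3) `R` is a bijection of `dom k l` onto `dom l k`, with inverse the analogous map
    -- with the roles of `k` and `l` interchanged
    (∀ x ∈ dom k l, ∀ y ∈ dom l k, (Rrel k l x y ↔ Rrel l k y x)) :=
  stmt10_general k l

end Stmt10
end

section
/- The map M2 : 𝒟 → 𝒫 defined by M2(d)(s) = \bar p(s; a_i, b_i), where i is the unique index with s_i ≥ s > s_{i−1} (with the conventions s_{N+1} = +∞ and s_0 = −∞), is a bijection. -/
namespace Stmt13

/-- `(a,b)` is a domain. -/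
def IsDomain (m n : ℤ) (d : ℤ × ℤ) : Prop :=
  0 ≤ d.1 ∧ d.1 ≤ m - n ∧ 0 ≤ d.2 ∧ d.2 ≤ n

/-- The ground-state path value `\bar p(s; a, b)` (position `s ∈ ℤ`). -/
def barp (m n a b : ℤ) (s : ℤ) : ℤ :=
  if s % 2 = 1 then n - b else if s % 4 = 0 then a + b else m - n - a + b

/-- Membership in the space `𝒫` of bi-infinite paths. -/
def InP (m n : ℤ) (p : ℤ → ℤ) : Prop :=
  (∀ s : ℤ, 0 ≤ p s ∧ p s ≤ (if s % 2 = 1 then n else m)) ∧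
  (∃ a b : ℤ, IsDomain m n (a, b) ∧ ∃ S : ℤ, ∀ s ≥ S, p s = barp m n a b s) ∧
  (∃ a' b' : ℤ, IsDomain m n (a', b') ∧ ∃ S : ℤ, ∀ s ≤ S, p s = barp m n a' b' s)

/-- The raw data of an element of `𝒟`: a sequence of `N+1` domains
`(a_{N+1},b_{N+1}) ⋯ (a_1,b_1)` (index `i : Fin (N+1)` corresponds to `(a_{i+1},b_{i+1})`)
and wall positions `s_N > ⋯ > s_1` (index `i : Fin N` corresponds to `s_{i+1}`). -/
structure DWData where
  N : ℕ
  dom : Fin (N + 1) → ℤ × ℤ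
  pos : Fin N → ℤ

/-- Wall types forcing position `≡ 0 (mod 2)` or `≡ 1 (mod 4)`. -/
def WallParity1 (m n : ℤ) (d2 d1 : ℤ × ℤ) : Prop :=
  (d2.1 = d1.1 ∧ d1.1 = 0 ∧ d1.2 < d2.2) ∨ (d2.1 = d1.1 ∧ d1.1 = m - n ∧ d2.2 < d1.2)

/-- Wall types forcing position `≡ 0 (mod 2)` or `≡ 3 (mod 4)`. -/
def WallParity3 (m n : ℤ) (d2 d1 : ℤ × ℤ) : Prop :=
  (d2.1 = d1.1 ∧ d1.1 = 0 ∧ d2.2 < d1.2) ∨ (d2.1 = d1.1 ∧ d1.1 = m - n ∧ d1.2 < d2.2)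

/-- Membership in `𝒟`. -/
def InD (m n : ℤ) (d : DWData) : Prop :=
  (∀ i, IsDomain m n (d.dom i)) ∧
  (∀ i : Fin d.N, d.dom i.succ ≠ d.dom i.castSucc) ∧
  StrictMono d.pos ∧
  (∀ i : Fin d.N,
    (WallParity1 m n (d.dom i.succ) (d.dom i.castSucc) →
      d.pos i % 2 = 0 ∨ d.pos i % 4 = 1) ∧
    (WallParity3 m n (d.dom i.succ) (d.dom i.castSucc) →
      d.pos i % 2 = 0 ∨ d.pos i % 4 = 3) ∧
    (¬ WallParity1 m n (d.dom i.succ) (d.dom i.castSucc) →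
      ¬ WallParity3 m n (d.dom i.succ) (d.dom i.castSucc) →
      d.pos i % 2 = 0))

/-- `p = M2 d` : whenever `s` lies in the range `s_i ≥ s > s_{i-1}` of the `i`-th domain
(with the conventions `s_{N+1} = +∞`, `s_0 = -∞`), `p(s) = \bar p(s; a_i, b_i)`. -/
def RelDP (m n : ℤ) (d : DWData) (p : ℤ → ℤ) : Prop :=
  ∀ (i : Fin (d.N + 1)) (s : ℤ),
    (∀ j : Fin d.N, (j : ℕ) + 1 = (i : ℕ) → d.pos j < s) →
    (∀ j : Fin d.N, (j : ℕ) = (i : ℕ) → s ≤ d.pos j) →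
    p s = barp m n (d.dom i).1 (d.dom i).2 s


def idx (d : DWData) (s : ℤ) : Fin (d.N + 1) :=
  ⟨(Finset.univ.filter (fun j => d.pos j < s)).card,
   Nat.lt_succ_of_le (le_trans (Finset.card_filter_le _ _) (by simp))⟩

lemma idx_lt_iff {d : DWData} (hm : StrictMono d.pos) {s : ℤ} {l : Fin d.N} :
    d.pos l < s ↔ (l : ℕ) < (idx d s : ℕ) := by
  constructor
  · intro h
    have hsub : Finset.Iic l ⊆ Finset.univ.filter (fun j => d.pos j < s) := by
      intro x hx
      simp only [Finset.mem_Iic] at hx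
      simp only [Finset.mem_filter, Finset.mem_univ, true_and]
      exact lt_of_le_of_lt (hm.monotone hx) h
    have hc := Finset.card_le_card hsub
    rw [Fin.card_Iic] at hc
    simpa [idx] using hc
  · intro h
    by_contra hc
    push_neg at hc
    have hsub : Finset.univ.filter (fun j => d.pos j < s) ⊆ Finset.Iio l := by
      intro x hx
      simp only [Finset.mem_filter, Finset.mem_univ, true_and] at hx
      simp only [Finset.mem_Iio]
      by_contra hxl
      push_neg at hxl
      exact absurd (lt_of_lt_of_le hx (le_trans hc (hm.monotone hxl))) (lt_irrefl _)
    have hc2 := Finset.card_le_card hsub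
    rw [Fin.card_Iio] at hc2
    simp only [idx] at h
    omega

lemma idx_eq {d : DWData} (hm : StrictMono d.pos) {s : ℤ} {i : Fin (d.N + 1)}
    (h1 : ∀ j : Fin d.N, (j : ℕ) + 1 = (i : ℕ) → d.pos j < s)
    (h2 : ∀ j : Fin d.N, (j : ℕ) = (i : ℕ) → s ≤ d.pos j) :
    idx d s = i := by
  have hiN : (i : ℕ) ≤ d.N := Nat.lt_succ_iff.mp i.isLt
  apply Fin.ext
  rcases lt_trichotomy ((idx d s : ℕ)) ((i : ℕ)) with h | h | h
  · exfalso
    have hjlt : (i:ℕ) - 1 < d.N := by omega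
    have hlt := h1 ⟨(i:ℕ)-1, hjlt⟩ (by simp; omega)
    have h2' := (idx_lt_iff hm).mp hlt
    simp only at h2'
    omega
  · exact h
  · exfalso
    have hjlt : (i:ℕ) < d.N := by have := (idx d s).isLt; omega
    have hle := h2 ⟨(i:ℕ), hjlt⟩ rfl
    have h2' : ¬ d.pos ⟨(i:ℕ), hjlt⟩ < s := not_lt.mpr hle
    rw [idx_lt_iff hm] at h2'
    simp only at h2'
    omega


def StepD (d : DWData) (s : ℤ) : ℤ × ℤ := d.dom (idx d s)

lemma relDP_eval {m n : ℤ} {d : DWData} {p : ℤ → ℤ} (hm : StrictMono d.pos)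
    (hrel : RelDP m n d p) (s : ℤ) :
    p s = barp m n (StepD d s).1 (StepD d s).2 s := by
  apply hrel (idx d s) s
  · intro j hj
    exact (idx_lt_iff hm).mpr (by omega)
  · intro j hj
    by_contra hc
    push_neg at hc
    have := (idx_lt_iff hm).mp hc
    omega

lemma idx_pos {d : DWData} (hm : StrictMono d.pos) (j : Fin d.N) :
    idx d (d.pos j) = j.castSucc := by
  apply idx_eq hm
  · intro l hl
    apply hm
    simp only [Fin.coe_castSucc] at hl
    exact Fin.lt_def.mpr (by omega)
  · intro l hl
    have : l = j := Fin.ext (by simpa using hl)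
    rw [this]

lemma idx_pos_succ {d : DWData} (hm : StrictMono d.pos) (j : Fin d.N) :
    idx d (d.pos j + 1) = j.succ := by
  apply idx_eq hm
  · intro l hl
    have : l = j := Fin.ext (by simp at hl; omega)
    rw [this]; omega
  · intro l hl
    have hjl : j < l := Fin.lt_def.mpr (by simp at hl; omega)
    have := hm hjl
    omega

lemma idx_succ_of_ne {d : DWData} {s : ℤ} (h : ∀ j, d.pos j ≠ s) :
    idx d (s+1) = idx d s := by
  apply Fin.ext
  simp only [idx]
  congr 1
  apply Finset.filter_congr
  intro j _
  have := h j
  constructor <;> (intro; omega)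

lemma step_succ {d : DWData} (hm : StrictMono d.pos) (s : ℤ) :
    StepD d (s+1) = StepD d s ∨
    ∃ j : Fin d.N, d.pos j = s ∧ StepD d s = d.dom j.castSucc ∧ StepD d (s+1) = d.dom j.succ := by
  by_cases h : ∃ j, d.pos j = s
  · obtain ⟨j, hj⟩ := h
    right
    refine ⟨j, hj, ?_, ?_⟩
    · rw [StepD, ← hj, idx_pos hm]
    · rw [StepD, ← hj, idx_pos_succ hm]
  · left
    push_neg at h
    rw [StepD, StepD, idx_succ_of_ne h]

lemma exists_pos_bound (d : DWData) : ∃ T : ℤ, ∀ j : Fin d.N, d.pos j < T ∧ -T < d.pos j := by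
  rcases Nat.eq_zero_or_pos d.N with h | h
  · exact ⟨0, fun j => absurd j.isLt (by omega)⟩
  · have hne : (Finset.univ.image d.pos).Nonempty :=
      Finset.Nonempty.image ⟨⟨0, h⟩, Finset.mem_univ _⟩ _
    refine ⟨|(Finset.univ.image d.pos).max' hne| + |(Finset.univ.image d.pos).min' hne| + 1,
      fun j => ?_⟩
    have hj1 := Finset.le_max' _ _ (Finset.mem_image_of_mem d.pos (Finset.mem_univ j))
    have hj2 := Finset.min'_le _ _ (Finset.mem_image_of_mem d.pos (Finset.mem_univ j))
    have h3 := le_abs_self ((Finset.univ.image d.pos).max' hne)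
    have h4 := neg_abs_le ((Finset.univ.image d.pos).min' hne)
    have h5 := abs_nonneg ((Finset.univ.image d.pos).max' hne)
    have h6 := abs_nonneg ((Finset.univ.image d.pos).min' hne)
    constructor <;> omega


def recEven (m n : ℤ) (p : ℤ → ℤ) (s : ℤ) : ℤ × ℤ :=
  if s % 4 = 0 then
    if p s < n - p (s-1) then (0, p s)
    else if p s ≤ (m - n) + (n - p (s-1)) then (p s - (n - p (s-1)), n - p (s-1))
    else (m - n, p s - (m - n))
  else
    if p s < n - p (s-1) then (m - n, p s)
    else if p s ≤ (m - n) + (n - p (s-1)) then ((m - n) + (n - p (s-1)) - p s, n - p (s-1))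
    else (0, p s - (m - n))

def recD (m n : ℤ) (p : ℤ → ℤ) (s : ℤ) : ℤ × ℤ :=
  if s % 2 = 1 then ((recEven m n p (s+1)).1, n - p s) else recEven m n p s

lemma recD_eval (m n : ℤ) (p : ℤ → ℤ) (s : ℤ) :
    barp m n (recD m n p s).1 (recD m n p s).2 s = p s := by
  unfold recD recEven barp
  split_ifs <;> simp <;> omega

lemma recEven_dom {m n : ℤ} {p : ℤ → ℤ} (hmn : n < m)
    (hb : ∀ s, 0 ≤ p s ∧ p s ≤ (if s % 2 = 1 then n else m)) {s : ℤ} (hs : s % 2 = 0) :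
    IsDomain m n (recEven m n p s) := by
  have hb1 := hb (s-1)
  have hb0 := hb s
  rw [if_pos (by omega : (s-1) % 2 = 1)] at hb1
  rw [if_neg (by omega : ¬ s % 2 = 1)] at hb0
  unfold recEven
  split_ifs <;> simp [IsDomain] <;> omega

lemma recD_dom {m n : ℤ} {p : ℤ → ℤ} (hmn : n < m)
    (hb : ∀ s, 0 ≤ p s ∧ p s ≤ (if s % 2 = 1 then n else m)) (s : ℤ) :
    IsDomain m n (recD m n p s) := by
  rcases (by omega : s % 2 = 1 ∨ s % 2 = 0) with h | h
  · rw [recD, if_pos h]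
    have h1 := recEven_dom hmn hb (s := s+1) (by omega)
    have h2 := hb s
    rw [if_pos h] at h2
    exact ⟨h1.1, h1.2.1, by omega, by omega⟩
  · rw [recD, if_neg (by omega)]
    exact recEven_dom hmn hb h

lemma recEven_eventual {m n a b : ℤ} {p : ℤ → ℤ} (hd : IsDomain m n (a, b)) {S : ℤ}
    (h : ∀ s ≥ S, p s = barp m n a b s) :
    ∀ s, s % 2 = 0 → S + 1 ≤ s → recEven m n p s = (a, b) := by
  obtain ⟨h1, h2, h3, h4⟩ := hd
  simp only at h1 h2 h3 h4
  intro s hs2 hsS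
  have hp1 : p (s-1) = n - b := by
    rw [h (s-1) (by omega), barp, if_pos (by omega)]
  rcases (by omega : s % 4 = 0 ∨ s % 4 = 2) with h4' | h4'
  · have hp : p s = a + b := by
      rw [h s (by omega), barp, if_neg (by omega), if_pos h4']
    rw [recEven, if_pos h4', hp1, hp, if_neg (by omega), if_pos (by omega)]
    simp only [Prod.mk.injEq]
    omega
  · have hp : p s = m - n - a + b := by
      rw [h s (by omega), barp, if_neg (by omega), if_neg (by omega)]
    rw [recEven, if_neg (by omega), hp1, hp, if_neg (by omega), if_pos (by omega)]
    simp only [Prod.mk.injEq]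
    omega

lemma recD_eventual_right {m n a b : ℤ} {p : ℤ → ℤ} (hd : IsDomain m n (a, b)) {S : ℤ}
    (h : ∀ s ≥ S, p s = barp m n a b s) :
    ∀ s, S + 1 ≤ s → recD m n p s = (a, b) := by
  intro s hs
  rcases (by omega : s % 2 = 1 ∨ s % 2 = 0) with h2 | h2
  · rw [recD, if_pos h2, recEven_eventual hd h (s+1) (by omega) (by omega)]
    have hp : p s = n - b := by rw [h s (by omega), barp, if_pos h2]
    simp only [Prod.mk.injEq]
    exact ⟨by simp, by omega⟩
  · rw [recD, if_neg (by omega)]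
    exact recEven_eventual hd h s h2 hs

lemma recD_eventual_left {m n a b : ℤ} {p : ℤ → ℤ} (hd : IsDomain m n (a, b)) {S : ℤ}
    (h : ∀ s ≤ S, p s = barp m n a b s) :
    ∀ s, s ≤ S - 1 → recD m n p s = (a, b) := by
  have key : ∀ s, s % 2 = 0 → s ≤ S → recEven m n p s = (a, b) := by
    obtain ⟨h1, h2, h3, h4⟩ := hd
    simp only at h1 h2 h3 h4
    intro s hs2 hsS
    have hp1 : p (s-1) = n - b := by
      rw [h (s-1) (by omega), barp, if_pos (by omega)]
    rcases (by omega : s % 4 = 0 ∨ s % 4 = 2) with h4' | h4'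
    · have hp : p s = a + b := by
        rw [h s (by omega), barp, if_neg (by omega), if_pos h4']
      rw [recEven, if_pos h4', hp1, hp, if_neg (by omega), if_pos (by omega)]
      simp only [Prod.mk.injEq]
      omega
    · have hp : p s = m - n - a + b := by
        rw [h s (by omega), barp, if_neg (by omega), if_neg (by omega)]
      rw [recEven, if_neg (by omega), hp1, hp, if_neg (by omega), if_pos (by omega)]
      simp only [Prod.mk.injEq]
      omega
  intro s hs
  rcases (by omega : s % 2 = 1 ∨ s % 2 = 0) with h2 | h2
  · rw [recD, if_pos h2, key (s+1) (by omega) (by omega)]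
    have hp : p s = n - b := by rw [h s (by omega), barp, if_pos h2]
    simp only [Prod.mk.injEq]
    exact ⟨by simp, by omega⟩
  · rw [recD, if_neg (by omega)]
    exact key s h2 (by omega)

lemma const_of_no_jump (D : ℤ → ℤ × ℤ) (s : ℤ) :
    ∀ t : ℤ, s ≤ t → (∀ u, s ≤ u → u < t → D (u+1) = D u) → D t = D s := by
  have key : ∀ k : ℕ, ∀ t, t = s + k → (∀ u, s ≤ u → u < t → D (u+1) = D u) → D t = D s := by
    intro k
    induction k with
    | zero => intro t ht _; rw [ht]; simp
    | succ k ih =>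
        intro t ht hyp
        have h1 : D t = D (s + k) := by
          have h2 : t = (s + k) + 1 := by omega
          rw [h2]
          exact hyp (s+k) (by omega) (by omega)
        rw [h1]
        exact ih (s+k) rfl (fun u hu hut => hyp u hu (by omega))
  intro t hst hyp
  obtain ⟨k, hk⟩ := Int.le.dest hst
  exact key k t (by omega) hyp


lemma barp_mem {m n a b : ℤ} (hmn : n < m) (hd : IsDomain m n (a, b)) (s : ℤ) :
    0 ≤ barp m n a b s ∧ barp m n a b s ≤ (if s % 2 = 1 then n else m) := by
  obtain ⟨h1, h2, h3, h4⟩ := hd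
  simp only at h1 h2 h3 h4
  unfold barp
  split_ifs <;> constructor <;> omega

lemma part1 (m n : ℤ) (hmn : n < m) (d : DWData) (hd : InD m n d) :
    ∃! p : ℤ → ℤ, InP m n p ∧ RelDP m n d p := by
  obtain ⟨hdom, hne, hm, hpar⟩ := hd
  obtain ⟨T, hT⟩ := exists_pos_bound d
  refine ⟨fun s => barp m n (StepD d s).1 (StepD d s).2 s, ⟨⟨?_, ?_, ?_⟩, ?_⟩, ?_⟩
  · intro s
    have h := hdom (idx d s)
    exact barp_mem hmn ⟨h.1, h.2.1, h.2.2.1, h.2.2.2⟩ s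
  · refine ⟨(d.dom (Fin.last d.N)).1, (d.dom (Fin.last d.N)).2, ?_, T, ?_⟩
    · have h := hdom (Fin.last d.N)
      exact ⟨h.1, h.2.1, h.2.2.1, h.2.2.2⟩
    · intro s hs
      have hidx : idx d s = Fin.last d.N := by
        apply idx_eq hm
        · intro j _
          exact lt_of_lt_of_le (hT j).1 hs
        · intro j hj
          exact absurd hj (by have := j.isLt; simp [Fin.last]; omega)
      simp only [StepD, hidx]
  · refine ⟨(d.dom 0).1, (d.dom 0).2, ?_, -T, ?_⟩
    · have h := hdom 0
      exact ⟨h.1, h.2.1, h.2.2.1, h.2.2.2⟩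
    · intro s hs
      have hidx : idx d s = 0 := by
        apply idx_eq hm
        · intro j hj
          exact absurd hj (by simp)
        · intro j _
          have := (hT j).2
          omega
      simp only [StepD, hidx]
  · intro i s h1 h2
    have hidx : idx d s = i := idx_eq hm h1 h2
    simp only [StepD, hidx]
  · rintro q ⟨hq, hrel⟩
    funext s
    exact relDP_eval hm hrel s

lemma step_eq_recD (m n : ℤ) (hmn : n < m) (p : ℤ → ℤ)
    (hb : ∀ s, 0 ≤ p s ∧ p s ≤ (if s % 2 = 1 then n else m))
    {d : DWData} (hd : InD m n d) (hrel : RelDP m n d p) :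
    ∀ s, StepD d s = recD m n p s := by
  obtain ⟨hdom, hne, hm, hpar⟩ := hd
  have hEval : ∀ s, p s = barp m n (StepD d s).1 (StepD d s).2 s := relDP_eval hm hrel
  have htrans : ∀ s : ℤ, s % 2 = 1 → (StepD d (s+1)).1 = (StepD d s).1 ∧
      (StepD d (s+1) = StepD d s ∨
       ((s % 4 = 1 → WallParity1 m n (StepD d (s+1)) (StepD d s)) ∧
        (s % 4 = 3 → WallParity3 m n (StepD d (s+1)) (StepD d s)))) := by
    intro s hs
    rcases step_succ hm s with h | ⟨j, hj, hc, hsc⟩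
    · rw [h]; exact ⟨rfl, Or.inl rfl⟩
    · have hps : d.pos j % 2 = 1 := by rw [hj]; exact hs
      obtain ⟨c1, c2, c3⟩ := hpar j
      rw [hc, hsc]
      by_cases hP1 : WallParity1 m n (d.dom j.succ) (d.dom j.castSucc)
      · have h41 : d.pos j % 4 = 1 := by
          rcases c1 hP1 with h' | h'
          · omega
          · exact h'
        refine ⟨?_, Or.inr ⟨fun _ => hP1, fun h3 => ?_⟩⟩
        · rcases hP1 with ⟨ha, _, _⟩ | ⟨ha, _, _⟩ <;> exact ha
        · exfalso; rw [hj] at h41; omega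
      · by_cases hP3 : WallParity3 m n (d.dom j.succ) (d.dom j.castSucc)
        · have h43 : d.pos j % 4 = 3 := by
            rcases c2 hP3 with h' | h'
            · omega
            · exact h'
          refine ⟨?_, Or.inr ⟨fun h1' => ?_, fun _ => hP3⟩⟩
          · rcases hP3 with ⟨ha, _, _⟩ | ⟨ha, _, _⟩ <;> exact ha
          · exfalso; rw [hj] at h43; omega
        · exfalso
          have := c3 hP1 hP3
          omega
  have heven : ∀ s : ℤ, s % 2 = 0 → StepD d s = recD m n p s := by
    intro s hs
    have hsodd : (s-1) % 2 = 1 := by omega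
    have hb2 : (StepD d (s-1)).2 = n - p (s-1) := by
      have h := hEval (s-1)
      rw [barp, if_pos hsodd] at h
      omega
    have hDom : IsDomain m n (StepD d s) := hdom (idx d s)
    obtain ⟨hA0, hA1, hB0, hB1⟩ := hDom
    have htr := htrans (s-1) hsodd
    rw [show s - 1 + 1 = s by ring] at htr
    obtain ⟨hfst, hcase⟩ := htr
    have hv := hEval s
    rw [recD, if_neg (by omega)]
    rcases (by omega : s % 4 = 0 ∨ s % 4 = 2) with h4 | h4
    · rw [barp, if_neg (by omega), if_pos h4] at hv
      rw [recEven, if_pos h4]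
      rcases hcase with heq | ⟨_, hP3⟩
      · have hBb : (StepD d s).2 = n - p (s-1) := by rw [heq]; exact hb2
        rw [if_neg (by omega), if_pos (by omega)]
        rw [Prod.ext_iff]
        constructor <;> omega
      · rcases hP3 (by omega) with ⟨he, h0, hlt⟩ | ⟨he, hMN, hgt⟩
        · rw [if_pos (by omega)]
          rw [Prod.ext_iff]
          constructor <;> omega
        · rw [if_neg (by omega), if_neg (by omega)]
          rw [Prod.ext_iff]
          constructor <;> omega
    · rw [barp, if_neg (by omega), if_neg (by omega)] at hv
      rw [recEven, if_neg (by omega)]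
      rcases hcase with heq | ⟨hP1, _⟩
      · have hBb : (StepD d s).2 = n - p (s-1) := by rw [heq]; exact hb2
        rw [if_neg (by omega), if_pos (by omega)]
        rw [Prod.ext_iff]
        constructor <;> omega
      · rcases hP1 (by omega) with ⟨he, h0, hlt⟩ | ⟨he, hMN, hgt⟩
        · rw [if_neg (by omega), if_neg (by omega)]
          rw [Prod.ext_iff]
          constructor <;> omega
        · rw [if_pos (by omega)]
          rw [Prod.ext_iff]
          constructor <;> omega
  intro s
  rcases (by omega : s % 2 = 1 ∨ s % 2 = 0) with hs | hs
  · rw [recD, if_pos hs]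
    have h1 := heven (s+1) (by omega)
    have hfst := (htrans s hs).1
    have hb2 : (StepD d s).2 = n - p s := by
      have h := hEval s
      rw [barp, if_pos hs] at h
      omega
    have h2 : recD m n p (s+1) = recEven m n p (s+1) := by rw [recD, if_neg (by omega)]
    rw [Prod.ext_iff]
    constructor
    · rw [← h2, ← h1, hfst]
    · exact hb2
  · exact heven s hs

lemma step_jump_iff {m n : ℤ} {d : DWData} (hd : InD m n d) (s : ℤ) :
    StepD d (s+1) ≠ StepD d s ↔ ∃ j, d.pos j = s := by
  obtain ⟨_, hne, hm, _⟩ := hd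
  constructor
  · intro h
    rcases step_succ hm s with h' | ⟨j, hj, _, _⟩
    · exact absurd h' h
    · exact ⟨j, hj⟩
  · rintro ⟨j, rfl⟩
    rw [StepD, StepD, idx_pos hm, idx_pos_succ hm]
    exact hne j

lemma eq_of_step_eq {m n : ℤ} {d1 d2 : DWData} (h1 : InD m n d1) (h2 : InD m n d2)
    (h : ∀ s, StepD d1 s = StepD d2 s) : d1 = d2 := by
  have hrange : ∀ s : ℤ, (∃ j, d1.pos j = s) ↔ (∃ j, d2.pos j = s) := by
    intro s
    rw [← step_jump_iff h1 s, ← step_jump_iff h2 s, h s, h (s+1)]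
  have hm1 : StrictMono d1.pos := h1.2.2.1
  have hm2 : StrictMono d2.pos := h2.2.2.1
  have himg : Finset.image d1.pos Finset.univ = Finset.image d2.pos Finset.univ := by
    ext s
    simp only [Finset.mem_image, Finset.mem_univ, true_and]
    exact hrange s
  have hcard1 : (Finset.image d1.pos Finset.univ).card = d1.N := by
    rw [Finset.card_image_of_injective _ hm1.injective, Finset.card_univ, Fintype.card_fin]
  have hcard2 : (Finset.image d2.pos Finset.univ).card = d2.N := by
    rw [Finset.card_image_of_injective _ hm2.injective, Finset.card_univ, Fintype.card_fin]
  have hN : d1.N = d2.N := by rw [← hcard1, himg, hcard2]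
  obtain ⟨T, hT⟩ := exists_pos_bound d1
  obtain ⟨N1, dom1, pos1⟩ := d1
  obtain ⟨N2, dom2, pos2⟩ := d2
  simp only at hm1 hm2 himg hcard1 hcard2 hrange hN hT h ⊢
  subst hN
  have hpos : pos1 = pos2 := by
    have e1 := Finset.orderEmbOfFin_unique hcard1 (f := pos1)
      (fun x => Finset.mem_image_of_mem _ (Finset.mem_univ x)) hm1
    have e2 := Finset.orderEmbOfFin_unique hcard1 (f := pos2)
      (fun x => by rw [himg]; exact Finset.mem_image_of_mem _ (Finset.mem_univ x)) hm2
    rw [e1, e2]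
  subst hpos
  have hdomeq : dom1 = dom2 := by
    funext i
    by_cases hi : (i : ℕ) < N1
    · have e := h (pos1 ⟨(i : ℕ), hi⟩)
      rw [StepD, StepD, idx_pos (d := ⟨N1, dom1, pos1⟩) hm1 ⟨(i : ℕ), hi⟩,
        idx_pos (d := ⟨N1, dom2, pos1⟩) hm2 ⟨(i : ℕ), hi⟩] at e
      have hci : ((⟨(i : ℕ), hi⟩ : Fin N1).castSucc) = i := Fin.ext rfl
      rw [hci] at e
      exact e
    · have e := h T
      have hvac1 : ∀ j : Fin N1, (j : ℕ) = (i : ℕ) → T ≤ pos1 j := by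
        intro j hj
        exact absurd hj (by have := j.isLt; have := i.isLt; omega)
      rw [StepD, StepD, idx_eq (d := ⟨N1, dom1, pos1⟩) hm1 (fun j _ => (hT j).1) hvac1,
        idx_eq (d := ⟨N1, dom2, pos1⟩) hm2 (fun j _ => (hT j).1) hvac1] at e
      exact e
  rw [hdomeq]

lemma part2_exists (m n : ℤ) (hmn : n < m) (hn : 1 ≤ n) (p : ℤ → ℤ) (hp : InP m n p) :
    ∃ d : DWData, InD m n d ∧ RelDP m n d p ∧ ∀ s, StepD d s = recD m n p s := by
  obtain ⟨hb, ⟨a, b, hdab, S2, h2⟩, ⟨a', b', hdab', S1, h1⟩⟩ := hp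
  set D := recD m n p with hD
  set R := S2 + 1 with hR
  set L := min (S1 - 2) R with hL
  have hRight : ∀ s, R ≤ s → D s = (a, b) := fun s hs =>
    recD_eventual_right hdab h2 s (by omega)
  have hLeft : ∀ s, s ≤ L → D s = (a', b') := fun s hs =>
    recD_eventual_left hdab' h1 s (by omega)
  have hLR : L ≤ R := min_le_right _ _
  set J : Finset ℤ := (Finset.Icc L R).filter (fun s => D (s+1) ≠ D s) with hJ
  have hJmem : ∀ s, D (s+1) ≠ D s ↔ s ∈ J := by
    intro s
    rw [hJ]
    simp only [Finset.mem_filter, Finset.mem_Icc]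
    constructor
    · intro hne
      refine ⟨⟨?_, ?_⟩, hne⟩
      · by_contra hc
        push_neg at hc
        exact hne (((hLeft (s+1) (by omega)).trans (hLeft s (by omega)).symm))
      · by_contra hc
        push_neg at hc
        exact hne (((hRight (s+1) (by omega)).trans (hRight s (by omega)).symm))
    · exact fun h => h.2
  set N := J.card with hN
  set pos : Fin N → ℤ := fun i => J.orderEmbOfFin hN.symm i with hposdef
  have hposJ : ∀ i, pos i ∈ J := fun i => Finset.orderEmbOfFin_mem J hN.symm i
  have hposmono : StrictMono pos := (J.orderEmbOfFin hN.symm).strictMono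
  have hmono_lt : ∀ i l : Fin N, pos i < pos l → (i:ℕ) < (l:ℕ) := by
    intro i l hil
    exact Fin.lt_def.mp (hposmono.lt_iff_lt.mp hil)
  have hsurj : ∀ u, u ∈ J → ∃ i, pos i = u := by
    intro u hu
    have hr : u ∈ Set.range (J.orderEmbOfFin hN.symm) := by
      rw [Finset.range_orderEmbOfFin]; exact_mod_cast hu
    obtain ⟨i, hi⟩ := hr
    exact ⟨i, hi⟩
  have hjump : ∀ i, D (pos i + 1) ≠ D (pos i) ∧ L ≤ pos i ∧ pos i ≤ R := by
    intro i
    have hmem := hposJ i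
    rw [hJ] at hmem
    simp only [Finset.mem_filter, Finset.mem_Icc] at hmem
    exact ⟨hmem.2, hmem.1.1, hmem.1.2⟩
  have hconst : ∀ s t : ℤ, s ≤ t → (∀ i, ¬ (s ≤ pos i ∧ pos i < t)) → D t = D s := by
    intro s t hst hno
    apply const_of_no_jump D s t hst
    intro u hu hut
    by_contra hne
    obtain ⟨i, hi⟩ := hsurj u ((hJmem u).mp hne)
    exact hno i (by rw [hi]; exact ⟨hu, hut⟩)
  set dom : Fin (N+1) → ℤ × ℤ :=
    fun i => if h : (i : ℕ) < N then D (pos ⟨(i:ℕ), h⟩) else D (R+1) with hdomdef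
  have hcast : ∀ i : Fin N, dom i.castSucc = D (pos i) := by
    intro i
    have hlt : ((i.castSucc : Fin (N+1)) : ℕ) < N := by simpa using i.isLt
    rw [hdomdef]
    simp only
    rw [dif_pos hlt]
    congr 1
  have hsucc : ∀ i : Fin N, dom i.succ = D (pos i + 1) := by
    intro i
    by_cases hlt : ((i.succ : Fin (N+1)) : ℕ) < N
    · rw [hdomdef]
      simp only
      rw [dif_pos hlt]
      have hlt2 : (i:ℕ) + 1 < N := by simpa using hlt
      have heq2 : (⟨((i.succ : Fin (N+1)) : ℕ), hlt⟩ : Fin N) = ⟨(i:ℕ)+1, hlt2⟩ :=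
        Fin.ext (by simp)
      rw [heq2]
      have hle : pos i + 1 ≤ pos ⟨(i:ℕ)+1, hlt2⟩ := by
        have := hposmono (show i < ⟨(i:ℕ)+1, hlt2⟩ from Fin.lt_def.mpr (by simp))
        omega
      apply hconst (pos i + 1) _ hle
      rintro l ⟨hl1, hl2⟩
      have hgt : (i:ℕ) < (l:ℕ) := hmono_lt i l (by omega)
      have hless : (l:ℕ) < (i:ℕ)+1 := by
        have := hmono_lt l ⟨(i:ℕ)+1, hlt2⟩ hl2
        simpa using this
      omega
    · rw [hdomdef]
      simp only
      rw [dif_neg hlt]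
      apply hconst (pos i + 1) (R+1) (by have := (hjump i).2.2; omega)
      rintro l ⟨hl1, hl2⟩
      have hgt : (i:ℕ) < (l:ℕ) := hmono_lt i l (by omega)
      have hiN : (i:ℕ) + 1 = N := by have := i.isLt; simp at hlt; omega
      have := l.isLt
      omega
  have hposmono' : StrictMono (DWData.pos ⟨N, dom, pos⟩) := hposmono
  have hstep : ∀ s, StepD ⟨N, dom, pos⟩ s = D s := by
    intro s
    rw [StepD]
    by_cases hkN : ((idx ⟨N, dom, pos⟩ s : ℕ)) < N
    · have hdk : (⟨N, dom, pos⟩ : DWData).dom (idx ⟨N, dom, pos⟩ s) =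
          D (pos ⟨(idx ⟨N, dom, pos⟩ s : ℕ), hkN⟩) := by
        show dom _ = _
        rw [hdomdef]
        simp only
        rw [dif_pos hkN]
      rw [hdk]
      have hsle : s ≤ pos ⟨(idx ⟨N, dom, pos⟩ s : ℕ), hkN⟩ := by
        by_contra hc
        push_neg at hc
        have := (idx_lt_iff (d := ⟨N, dom, pos⟩) hposmono' (l := ⟨_, hkN⟩) (s := s)).mp hc
        simp only at this
        omega
      apply hconst s _ hsle
      rintro l ⟨hl1, hl2⟩
      have hlk : (l:ℕ) < (idx ⟨N, dom, pos⟩ s : ℕ) := by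
        have := hmono_lt l ⟨_, hkN⟩ hl2
        simpa using this
      have hcontr : pos l < s :=
        (idx_lt_iff (d := ⟨N, dom, pos⟩) hposmono' (l := l) (s := s)).mpr hlk
      omega
    · have hdk : (⟨N, dom, pos⟩ : DWData).dom (idx ⟨N, dom, pos⟩ s) = D (R+1) := by
        show dom _ = _
        rw [hdomdef]
        simp only
        rw [dif_neg hkN]
      rw [hdk]
      rcases le_or_gt s (R+1) with hsR | hsR
      · apply hconst s (R+1) hsR
        rintro l ⟨hl1, hl2⟩
        have hlk : (l:ℕ) < (idx ⟨N, dom, pos⟩ s : ℕ) := by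
          have hk := (idx ⟨N, dom, pos⟩ s).isLt
          have := l.isLt
          omega
        have hcontr : pos l < s :=
          (idx_lt_iff (d := ⟨N, dom, pos⟩) hposmono' (l := l) (s := s)).mpr hlk
        omega
      · refine (hconst (R+1) s (by omega) ?_).symm
        rintro l ⟨hl1, hl2⟩
        have := (hjump l).2.2
        omega
  refine ⟨⟨N, dom, pos⟩, ⟨?_, ?_, hposmono', ?_⟩, ?_, hstep⟩
  · -- IsDomain
    intro i
    show IsDomain m n (dom i)
    rw [hdomdef]
    simp only
    split_ifs
    · exact recD_dom hmn hb _
    · exact recD_dom hmn hb _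
  · -- consecutive distinct
    intro i
    show dom i.succ ≠ dom i.castSucc
    rw [hsucc i, hcast i]
    exact (hjump i).1
  · -- parity
    intro i
    obtain ⟨hji, hjL, hjR⟩ := hjump i
    have hgoalc : (⟨N, dom, pos⟩ : DWData).dom i.succ = D (pos i + 1) := hsucc i
    have hgoald : (⟨N, dom, pos⟩ : DWData).dom i.castSucc = D (pos i) := hcast i
    rw [hgoalc, hgoald]
    show (WallParity1 m n (D (pos i + 1)) (D (pos i)) → pos i % 2 = 0 ∨ pos i % 4 = 1) ∧
      (WallParity3 m n (D (pos i + 1)) (D (pos i)) → pos i % 2 = 0 ∨ pos i % 4 = 3) ∧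
      (¬ WallParity1 m n (D (pos i + 1)) (D (pos i)) →
        ¬ WallParity3 m n (D (pos i + 1)) (D (pos i)) → pos i % 2 = 0)
    rcases (by omega : pos i % 2 = 0 ∨ pos i % 2 = 1) with ht2 | ht2
    · exact ⟨fun _ => Or.inl ht2, fun _ => Or.inl ht2, fun _ _ => ht2⟩
    · set t := pos i with hti
      have ht11 : t + 1 - 1 = t := by ring
      have hDt1 : D (t+1) = recEven m n p (t+1) := by
        rw [hD]; unfold recD; rw [if_neg (by omega)]
      have hDt : D t = ((recEven m n p (t+1)).1, n - p t) := by
        rw [hD]; unfold recD; rw [if_pos ht2]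
      rcases (by omega : t % 4 = 1 ∨ t % 4 = 3) with ht4 | ht4
      · by_cases hc1 : p (t+1) < n - p t
        · have hre : recEven m n p (t+1) = (m - n, p (t+1)) := by
            unfold recEven; rw [ht11, if_neg (by omega), if_pos hc1]
          rw [hDt1, hre, hDt, hre]
          refine ⟨fun _ => Or.inr ht4, fun hP3 => ?_, fun hnP1 _ => ?_⟩
          · exfalso
            rcases hP3 with ⟨_, h0, _⟩ | ⟨_, _, hlt⟩
            · simp only at h0; omega
            · simp only at hlt; omega
          · exfalso
            exact hnP1 (Or.inr ⟨rfl, rfl, hc1⟩)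
        · by_cases hc2 : p (t+1) ≤ (m-n) + (n - p t)
          · exfalso
            apply hji
            have hre : recEven m n p (t+1) = ((m-n) + (n - p t) - p (t+1), n - p t) := by
              unfold recEven; rw [ht11, if_neg (by omega), if_neg hc1, if_pos hc2]
            rw [hDt1, hre, hDt, hre]
          · have hre : recEven m n p (t+1) = (0, p (t+1) - (m-n)) := by
              unfold recEven; rw [ht11, if_neg (by omega), if_neg hc1, if_neg hc2]
            rw [hDt1, hre, hDt, hre]
            refine ⟨fun _ => Or.inr ht4, fun hP3 => ?_, fun hnP1 _ => ?_⟩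
            · exfalso
              rcases hP3 with ⟨_, _, hlt⟩ | ⟨_, h0, _⟩
              · simp only at hlt; omega
              · simp only at h0; omega
            · exfalso
              exact hnP1 (Or.inl ⟨rfl, rfl, by simp only; omega⟩)
      · by_cases hc1 : p (t+1) < n - p t
        · have hre : recEven m n p (t+1) = (0, p (t+1)) := by
            unfold recEven; rw [ht11, if_pos (by omega), if_pos hc1]
          rw [hDt1, hre, hDt, hre]
          refine ⟨fun hP1 => ?_, fun _ => Or.inr ht4, fun _ hnP3 => ?_⟩
          · exfalso
            rcases hP1 with ⟨_, _, hlt⟩ | ⟨_, h0, _⟩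
            · simp only at hlt; omega
            · simp only at h0; omega
          · exfalso
            exact hnP3 (Or.inl ⟨rfl, rfl, hc1⟩)
        · by_cases hc2 : p (t+1) ≤ (m-n) + (n - p t)
          · exfalso
            apply hji
            have hre : recEven m n p (t+1) = (p (t+1) - (n - p t), n - p t) := by
              unfold recEven; rw [ht11, if_pos (by omega), if_neg hc1, if_pos hc2]
            rw [hDt1, hre, hDt, hre]
          · have hre : recEven m n p (t+1) = (m - n, p (t+1) - (m-n)) := by
              unfold recEven; rw [ht11, if_pos (by omega), if_neg hc1, if_neg hc2]
            rw [hDt1, hre, hDt, hre]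
            refine ⟨fun hP1 => ?_, fun _ => Or.inr ht4, fun _ hnP3 => ?_⟩
            · exfalso
              rcases hP1 with ⟨_, h0, _⟩ | ⟨_, _, hlt⟩
              · simp only at h0; omega
              · simp only at hlt; omega
            · exfalso
              exact hnP3 (Or.inr ⟨rfl, rfl, by simp only; omega⟩)
  · -- RelDP
    intro i s hh1 hh2
    have hidx : idx ⟨N, dom, pos⟩ s = i := idx_eq hposmono' hh1 hh2
    rw [← hidx]
    have hsd : (⟨N, dom, pos⟩ : DWData).dom (idx ⟨N, dom, pos⟩ s) = D s := hstep s
    rw [hsd, hD]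
    exact (recD_eval m n p s).symm


/-- `M2 : 𝒟 → 𝒫` is a bijection. -/
theorem stmt13 (m n : ℤ) (hmn : n < m) (hn : 1 ≤ n) :
    (∀ d : DWData, InD m n d → ∃! p : ℤ → ℤ, InP m n p ∧ RelDP m n d p) ∧
    (∀ p : ℤ → ℤ, InP m n p → ∃! d : DWData, InD m n d ∧ RelDP m n d p) := by
  constructor
  · intro d hd
    exact part1 m n hmn d hd
  · intro p hp
    obtain ⟨d, hInD, hRel, hstep⟩ := part2_exists m n hmn hn p hp
    refine ⟨d, ⟨hInD, hRel⟩, ?_⟩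
    rintro d' ⟨hInD', hRel'⟩
    apply eq_of_step_eq hInD' hInD
    intro s
    rw [step_eq_recD m n hmn p hp.1 hInD' hRel' s, hstep s]

end Stmt13
end
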